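/- arXiv:2002.06332 — 7 statements merged into one kernel-verified Lean document; each statement's English description precedes it below -/
import Mathlib

section
/- The one-time-measurement Jarzynski identity for the internal energy change holds: Σ_i (exp(−β ε_i)/Z_S0)·exp(−β (E(i) − ε_i)) = Z̃/Z_S0 = exp(−β ΔF̃), where ΔF̃ = −β⁻¹ ln(Z̃/Z_S0) is the information free energy difference. -/
open Matrix Kronecker BigOperators Finset

noncomputable section

/-- Partial trace over the bath (second tensor factor). -/
def ptraceB {n m : ℕ} (X : Matrix (Fin n × Fin m) (Fin n × Fin m) ℂ) :
    Matrix (Fin n) (Fin n) ℂ :=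
  Matrix.of fun i i' => ∑ j, X (i, j) (i', j)

/-- Outer product `|v⟩⟨v|`. -/
def outer {k : ℕ} (v : Fin k → ℂ) : Matrix (Fin k) (Fin k) ℂ :=
  Matrix.vecMulVec v (star v)

/-- Partition function `Z = Tr exp (−β H)` (real part of the trace). -/
def Zpart (β : ℝ) {k : ℕ} (H : Matrix (Fin k) (Fin k) ℂ) : ℝ :=
  (NormedSpace.exp ((-β) • H)).trace.re

/-- Gibbs state `exp (−β H) / Z`. -/
def gibbs (β : ℝ) {k : ℕ} (H : Matrix (Fin k) (Fin k) ℂ) : Matrix (Fin k) (Fin k) ℂ :=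
  ((Zpart β H : ℂ)⁻¹) • NormedSpace.exp ((-β) • H)

/-- The channel `Φ(ρ) = Tr_B [U (ρ ⊗ τB) U†]`. -/
def channel {n m : ℕ} (U : Matrix (Fin n × Fin m) (Fin n × Fin m) ℂ)
    (τB : Matrix (Fin m) (Fin m) ℂ) (ρ : Matrix (Fin n) (Fin n) ℂ) :
    Matrix (Fin n) (Fin n) ℂ :=
  ptraceB (U * (ρ ⊗ₖ τB) * Uᴴ)

/-! Writing `H_S0` in its eigenbasis gives `Z_S0 = ∑ i, exp (-β ε i)`, which is positive.
The identity itself is the termwise cancellation `exp (-β ε i) * exp (-β (E i - ε i)) = exp (-β E i)`,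
and `exp (-β ΔF̃) = Z̃ / Z_S0` is `exp ∘ log = id` on the positive ratio. -/

namespace Matrix

variable {ι : Type*} [Fintype ι] [DecidableEq ι]

theorem conjTranspose_mul_self_eq_one_of_orthonormal {e : ι → ι → ℂ}
    (he : ∀ i i', ∑ x, starRingEnd ℂ (e i x) * e i' x = if i = i' then 1 else 0) :
    (of e)ᵀᴴ * (of e)ᵀ = 1 := by
  ext i i'
  simp [mul_apply, one_apply, he]

theorem trace_exp_eq_sum_exp_of_orthonormal_eigenvectors (A : Matrix ι ι ℂ) {e : ι → ι → ℂ}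
    {μ : ι → ℂ} (he : ∀ i i', ∑ x, starRingEnd ℂ (e i x) * e i' x = if i = i' then 1 else 0)
    (heig : ∀ i, A *ᵥ e i = μ i • e i) :
    (NormedSpace.exp A).trace = ∑ i, Complex.exp (μ i) := by
  set V := (of e)ᵀ
  have hV : IsUnit V := (isUnit_iff_isUnit_det V).mpr
    (isUnit_det_of_left_inverse (conjTranspose_mul_self_eq_one_of_orthonormal he))
  have hAV : A * V = V * diagonal μ := by
    ext x i
    simpa [mul_apply, mulVec, dotProduct, V, mul_comm, diagonal_apply] using congrFun (heig i) x
  have hdiag : V⁻¹ * A * V = diagonal μ := by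
    rw [Matrix.mul_assoc, hAV, ← Matrix.mul_assoc,
      nonsing_inv_mul V ((isUnit_iff_isUnit_det V).mp hV), Matrix.one_mul]
  rw [← trace_conj' hV, ← exp_conj' V A hV, hdiag, exp_diagonal, trace_diagonal]
  simp [Complex.exp_eq_exp_ℂ]

end Matrix

theorem Zpart_eq_sum_exp {k : ℕ} (β : ℝ) (H : Matrix (Fin k) (Fin k) ℂ) {e : Fin k → Fin k → ℂ}
    {ε : Fin k → ℝ} (he : ∀ i i', ∑ x, starRingEnd ℂ (e i x) * e i' x = if i = i' then 1 else 0)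
    (heig : ∀ i, H *ᵥ e i = (ε i : ℂ) • e i) :
    Zpart β H = ∑ i, Real.exp (-(β * ε i)) := by
  have heig_smul : ∀ i, ((-β) • H) *ᵥ e i = ((-(β * ε i) : ℝ) : ℂ) • e i := fun i => by
    rw [smul_mulVec, heig, ← smul_assoc, Complex.real_smul]
    push_cast
    ring
  rw [Zpart, Matrix.trace_exp_eq_sum_exp_of_orthonormal_eigenvectors _ he heig_smul,
    Complex.re_sum]
  simp only [Complex.exp_ofReal_re]

theorem sum_exp_div_mul_exp_sub {ι : Type*} (s : Finset ι) (β Z : ℝ) (ε E : ι → ℝ) :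
    ∑ i ∈ s, Real.exp (-(β * ε i)) / Z * Real.exp (-(β * (E i - ε i)))
      = (∑ i ∈ s, Real.exp (-(β * E i))) / Z := by
  rw [sum_div]
  refine sum_congr rfl fun i _ => ?_
  rw [div_mul_eq_mul_div, ← Real.exp_add]
  congr 2
  ring

theorem Real.exp_neg_mul_neg_inv_mul_log {β x : ℝ} (hβ : β ≠ 0) (hx : 0 < x) :
    Real.exp (-(β * -(β⁻¹ * Real.log x))) = x := by
  rw [neg_mul_eq_mul_neg, neg_neg, ← mul_assoc, mul_inv_cancel₀ hβ, one_mul, Real.exp_log hx]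

theorem otm_jarzynski_energy_general
    (n : ℕ) (hn : 1 ≤ n)
    (β : ℝ) (hβ : 0 < β)
    (HS0 : Matrix (Fin n) (Fin n) ℂ)
    (e : Fin n → Fin n → ℂ) (ε : Fin n → ℝ)
    (he : ∀ i i', ∑ x, (starRingEnd ℂ) (e i x) * e i' x = if i = i' then 1 else 0)
    (heig : ∀ i, HS0 *ᵥ e i = (ε i : ℂ) • e i)
    (E : Fin n → ℝ)
    (Zt : ℝ) (hZt : Zt = ∑ i, Real.exp (-(β * E i)))
    (ΔFt : ℝ) (hΔFt : ΔFt = -(β⁻¹ * Real.log (Zt / Zpart β HS0))) :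
    ∑ i, (Real.exp (-(β * ε i)) / Zpart β HS0) * Real.exp (-(β * (E i - ε i)))
        = Zt / Zpart β HS0
      ∧ Zt / Zpart β HS0 = Real.exp (-(β * ΔFt)) := by
  have hne : (univ : Finset (Fin n)).Nonempty := univ_nonempty_iff.mpr ⟨⟨0, hn⟩⟩
  have hZ : 0 < Zpart β HS0 := by
    rw [Zpart_eq_sum_exp β HS0 he heig]
    exact sum_pos (fun i _ => Real.exp_pos _) hne
  have hZt_pos : 0 < Zt := hZt ▸ sum_pos (fun i _ => Real.exp_pos _) hne
  refine ⟨by rw [hZt, sum_exp_div_mul_exp_sub], ?_⟩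
  rw [hΔFt, Real.exp_neg_mul_neg_inv_mul_log hβ.ne' (div_pos hZt_pos hZ)]

theorem otm_jarzynski_energy
    (n m : ℕ) (hn : 1 ≤ n) (hm : 1 ≤ m)
    (β : ℝ) (hβ : 0 < β)
    (HS0 HSt : Matrix (Fin n) (Fin n) ℂ)
    (hHS0 : HS0.IsHermitian) (hHSt : HSt.IsHermitian)
    (HB : Matrix (Fin m) (Fin m) ℂ) (hHB : HB.IsHermitian)
    (e : Fin n → Fin n → ℂ) (ε : Fin n → ℝ)
    (he : ∀ i i', ∑ x, (starRingEnd ℂ) (e i x) * e i' x = if i = i' then 1 else 0)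
    (heig : ∀ i, HS0 *ᵥ e i = (ε i : ℂ) • e i)
    (U : Matrix (Fin n × Fin m) (Fin n × Fin m) ℂ)
    (hU : U ∈ Matrix.unitaryGroup (Fin n × Fin m) ℂ)
    (E : Fin n → ℝ)
    (hE : ∀ i, E i = ((HSt * channel U (gibbs β HB) (outer (e i))).trace).re)
    (Zt : ℝ) (hZt : Zt = ∑ i, Real.exp (-(β * E i)))
    (ΔFt : ℝ) (hΔFt : ΔFt = -(β⁻¹ * Real.log (Zt / Zpart β HS0))) :
    ∑ i, (Real.exp (-(β * ε i)) / Zpart β HS0) * Real.exp (-(β * (E i - ε i)))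
        = Zt / Zpart β HS0
      ∧ Zt / Zpart β HS0 = Real.exp (-(β * ΔFt)) :=
  otm_jarzynski_energy_general n hn β hβ HS0 e ε he heig E Zt hZt ΔFt hΔFt
end
end

section
/- The von Neumann entropy of the best possible guessed state Θ, namely −Σ_{i,j} λ_{ij} ln λ_{ij} where λ_{ij} = p(i)·exp(−β q_j)/Z_B are the eigenvalues of Θ in the orthonormal eigenbasis (U(e_i ⊗ f_j)), satisfies −Σ_{i,j} λ_{ij} ln λ_{ij} = ln Z̃ + ln Z_B + β Re Tr[(H_St ⊗ 1_m) Θ] + β Re Tr[H_B τ_B]. -/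
open Matrix Kronecker BigOperators Finset

noncomputable section

/-- Trace identity relating the kronecker product with the partial trace. -/
lemma trace_kron_one_mul {n m : ℕ} (A : Matrix (Fin n) (Fin n) ℂ)
    (X : Matrix (Fin n × Fin m) (Fin n × Fin m) ℂ) :
    ((A ⊗ₖ (1 : Matrix (Fin m) (Fin m) ℂ)) * X).trace = (A * ptraceB X).trace := by
  simp only [Matrix.trace, Matrix.diag_apply, Matrix.mul_apply, ptraceB, Matrix.of_apply,
    Matrix.kroneckerMap_apply, Matrix.one_apply, Fintype.sum_prod_type, mul_ite, mul_one,
    mul_zero, ite_mul, zero_mul, Finset.sum_ite_eq, Finset.mem_univ, if_true, Finset.mul_sum]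
  exact Finset.sum_congr rfl fun i _ => Finset.sum_comm

theorem guessed_state_entropy
    (n m : ℕ) (hn : 1 ≤ n) (hm : 1 ≤ m)
    (β : ℝ) (hβ : 0 < β)
    (HS0 HSt : Matrix (Fin n) (Fin n) ℂ)
    (hHS0 : HS0.IsHermitian) (hHSt : HSt.IsHermitian)
    (HB : Matrix (Fin m) (Fin m) ℂ) (hHB : HB.IsHermitian)
    (e : Fin n → Fin n → ℂ) (ε : Fin n → ℝ)
    (he : ∀ i i', ∑ x, (starRingEnd ℂ) (e i x) * e i' x = if i = i' then 1 else 0)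
    (heig : ∀ i, HS0 *ᵥ e i = (ε i : ℂ) • e i)
    (f : Fin m → Fin m → ℂ) (q : Fin m → ℝ)
    (hf : ∀ j j', ∑ x, (starRingEnd ℂ) (f j x) * f j' x = if j = j' then 1 else 0)
    (hfeig : ∀ j, HB *ᵥ f j = (q j : ℂ) • f j)
    (U : Matrix (Fin n × Fin m) (Fin n × Fin m) ℂ)
    (hU : U ∈ Matrix.unitaryGroup (Fin n × Fin m) ℂ)
    (E : Fin n → ℝ)
    (hE : ∀ i, E i = ((HSt * channel U (gibbs β HB) (outer (e i))).trace).re)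
    (Zt : ℝ) (hZt : Zt = ∑ i, Real.exp (-(β * E i)))
    (p : Fin n → ℝ) (hp : ∀ i, p i = Real.exp (-(β * E i)) / Zt)
    (Θ : Matrix (Fin n × Fin m) (Fin n × Fin m) ℂ)
    (hΘ : Θ = ∑ i, (p i : ℂ) • (U * (outer (e i) ⊗ₖ gibbs β HB) * Uᴴ))
    (lam : Fin n → Fin m → ℝ)
    (hlam : ∀ i j, lam i j = p i * Real.exp (-(β * q j)) / Zpart β HB) :
    -(∑ i, ∑ j, lam i j * Real.log (lam i j))
      = Real.log Zt + Real.log (Zpart β HB)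
        + β * (((HSt ⊗ₖ (1 : Matrix (Fin m) (Fin m) ℂ)) * Θ).trace).re
        + β * ((HB * gibbs β HB).trace).re := by
  -- The eigenvector matrix of the bath Hamiltonian
  set F : Matrix (Fin m) (Fin m) ℂ := Matrix.of (fun x j => f j x) with hF
  have hFunit : Fᴴ * F = 1 := by
    ext j j'
    simpa [Matrix.mul_apply, Matrix.conjTranspose_apply, hF, Matrix.one_apply] using hf j j'
  have hFinv : F⁻¹ = Fᴴ := Matrix.inv_eq_left_inv hFunit
  have hFF' : F * Fᴴ = 1 := mul_eq_one_comm.mp hFunit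
  have hFisUnit : IsUnit F := by
    exact Matrix.isUnit_iff_isUnit_det F |>.mpr (Matrix.isUnit_det_of_right_inverse hFF')
  -- diagonalization of HB
  have hHBdiag : HB = F * Matrix.diagonal (fun j => (q j : ℂ)) * F⁻¹ := by
    have h1 : HB * F = F * Matrix.diagonal (fun j => (q j : ℂ)) := by
      ext x j
      have := congr_fun (hfeig j) x
      simpa [Matrix.mul_apply, Matrix.mulVec, dotProduct, hF, Matrix.diagonal,
        mul_comm] using this
    calc HB = HB * (F * F⁻¹) := by rw [hFinv, hFF', mul_one]
      _ = (HB * F) * F⁻¹ := by rw [mul_assoc]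
      _ = F * Matrix.diagonal (fun j => (q j : ℂ)) * F⁻¹ := by rw [h1]
  -- exponential of -β HB
  have hDsmul : (-β : ℝ) • Matrix.diagonal (fun j => (q j : ℂ))
      = Matrix.diagonal (fun j => ((-(β * q j) : ℝ) : ℂ)) := by
    ext x y
    by_cases h : x = y
    · subst h
      simp [Matrix.smul_apply, Matrix.diagonal_apply_eq, Complex.real_smul]
    · simp [Matrix.smul_apply, Matrix.diagonal_apply_ne _ h, h]
  have hsmul : (-β) • HB = F * Matrix.diagonal (fun j => ((-(β * q j) : ℝ) : ℂ)) * F⁻¹ := by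
    rw [hHBdiag, ← hDsmul, mul_smul_comm, smul_mul_assoc]
  have hexp : NormedSpace.exp ((-β) • HB)
      = F * Matrix.diagonal (fun j => ((Real.exp (-(β * q j)) : ℝ) : ℂ)) * F⁻¹ := by
    rw [hsmul, Matrix.exp_conj F _ hFisUnit, Matrix.exp_diagonal]
    have : NormedSpace.exp (fun j => ((-(β * q j) : ℝ) : ℂ))
        = fun j => ((Real.exp (-(β * q j)) : ℝ) : ℂ) := by
      rw [Pi.exp_def]
      funext j
      rw [← Complex.exp_eq_exp_ℂ, Complex.ofReal_exp]
    rw [this]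
  -- trace of conjugated matrices
  have hinvF : F⁻¹ * F = 1 := by rw [hFinv]; exact hFunit
  have htrconj : ∀ D : Matrix (Fin m) (Fin m) ℂ, (F * D * F⁻¹).trace = D.trace := by
    intro D
    rw [Matrix.trace_mul_cycle, hinvF, Matrix.one_mul]
  -- the bath partition function
  have hZB : Zpart β HB = ∑ j, Real.exp (-(β * q j)) := by
    rw [Zpart, hexp, htrconj, Matrix.trace_diagonal]
    rw [Complex.re_sum]
    exact Finset.sum_congr rfl fun j _ => Complex.ofReal_re _
  have hZBpos : 0 < Zpart β HB := by
    rw [hZB]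
    exact Finset.sum_pos (fun j _ => Real.exp_pos _) ⟨⟨0, hm⟩, Finset.mem_univ _⟩
  have hZtpos : 0 < Zt := by
    rw [hZt]
    exact Finset.sum_pos (fun i _ => Real.exp_pos _) ⟨⟨0, hn⟩, Finset.mem_univ _⟩
  -- the Gibbs weights
  set r : Fin m → ℝ := fun j => Real.exp (-(β * q j)) / Zpart β HB with hr
  have hrpos : ∀ j, 0 < r j := fun j => div_pos (Real.exp_pos _) hZBpos
  have hppos : ∀ i, 0 < p i := by
    intro i; rw [hp]; exact div_pos (Real.exp_pos _) hZtpos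
  have hpsum : ∑ i, p i = 1 := by
    simp only [hp]
    rw [← Finset.sum_div, ← hZt, div_self (ne_of_gt hZtpos)]
  have hrsum : ∑ j, r j = 1 := by
    simp only [hr]
    rw [← Finset.sum_div, ← hZB, div_self (ne_of_gt hZBpos)]
  -- second trace: Re Tr (HB * gibbs) = Σ r j * q j
  have htr2 : ((HB * gibbs β HB).trace).re = ∑ j, r j * q j := by
    have hmul : HB * NormedSpace.exp ((-β) • HB)
        = F * Matrix.diagonal (fun j => (q j : ℂ) * ((Real.exp (-(β * q j)) : ℝ) : ℂ)) * F⁻¹ := by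
      rw [hexp, hHBdiag]
      calc F * Matrix.diagonal (fun j => (q j : ℂ)) * F⁻¹ *
            (F * Matrix.diagonal (fun j => ((Real.exp (-(β * q j)) : ℝ) : ℂ)) * F⁻¹)
          = F * (Matrix.diagonal (fun j => (q j : ℂ)) * ((F⁻¹ * F) *
            Matrix.diagonal (fun j => ((Real.exp (-(β * q j)) : ℝ) : ℂ)))) * F⁻¹ := by
            simp only [Matrix.mul_assoc]
        _ = F * Matrix.diagonal (fun j => (q j : ℂ) * ((Real.exp (-(β * q j)) : ℝ) : ℂ)) * F⁻¹ := by
            rw [hinvF, one_mul, Matrix.diagonal_mul_diagonal, Matrix.mul_assoc]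
    simp only [gibbs]
    rw [Matrix.mul_smul, Matrix.trace_smul, hmul, htrconj, Matrix.trace_diagonal]
    have h3 : (∑ j, (q j : ℂ) * ((Real.exp (-(β * q j)) : ℝ) : ℂ))
        = ((∑ j, q j * Real.exp (-(β * q j)) : ℝ) : ℂ) := by
      rw [Complex.ofReal_sum]
      exact Finset.sum_congr rfl fun j _ => (Complex.ofReal_mul _ _).symm
    rw [h3, smul_eq_mul, ← Complex.ofReal_inv, ← Complex.ofReal_mul, Complex.ofReal_re,
      Finset.mul_sum]
    exact Finset.sum_congr rfl fun j _ => by simp only [hr]; ring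
  -- first trace: Re Tr ((HSt ⊗ 1) Θ) = Σ p i * E i
  have htr1 : (((HSt ⊗ₖ (1 : Matrix (Fin m) (Fin m) ℂ)) * Θ).trace).re = ∑ i, p i * E i := by
    rw [hΘ, Matrix.mul_sum, Matrix.trace_sum, Complex.re_sum]
    refine Finset.sum_congr rfl fun i _ => ?_
    rw [Matrix.mul_smul, Matrix.trace_smul, trace_kron_one_mul]
    have : ptraceB (U * (outer (e i) ⊗ₖ gibbs β HB) * Uᴴ)
        = channel U (gibbs β HB) (outer (e i)) := rfl
    rw [this, smul_eq_mul, Complex.re_ofReal_mul, ← hE i]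
  -- the entropy computation
  have hloglam : ∀ i j, Real.log (lam i j)
      = (-(β * E i) - Real.log Zt) + (-(β * q j) - Real.log (Zpart β HB)) := by
    intro i j
    have h1 : lam i j = p i * r j := by rw [hlam, hr, mul_div_assoc]
    rw [h1, Real.log_mul (ne_of_gt (hppos i)) (ne_of_gt (hrpos j))]
    congr 1
    · rw [hp, Real.log_div (ne_of_gt (Real.exp_pos _)) (ne_of_gt hZtpos), Real.log_exp]
    · rw [hr, Real.log_div (ne_of_gt (Real.exp_pos _)) (ne_of_gt hZBpos), Real.log_exp]
  have hsum : (∑ i, ∑ j, lam i j * Real.log (lam i j))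
      = -(Real.log Zt + Real.log (Zpart β HB) + β * (∑ i, p i * E i) + β * (∑ j, r j * q j)) := by
    have key : ∀ i j, lam i j * Real.log (lam i j)
        = (p i * (-(β * E i) - Real.log Zt)) * r j
          + p i * (r j * (-(β * q j) - Real.log (Zpart β HB))) := by
      intro i j
      rw [hloglam i j]
      have h1 : lam i j = p i * r j := by rw [hlam, hr, mul_div_assoc]
      rw [h1]; ring
    calc (∑ i, ∑ j, lam i j * Real.log (lam i j))
        = ∑ i, ((p i * (-(β * E i) - Real.log Zt)) * (∑ j, r j)
            + p i * (∑ j, r j * (-(β * q j) - Real.log (Zpart β HB)))) := by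
          refine Finset.sum_congr rfl fun i _ => ?_
          rw [show (∑ j, lam i j * Real.log (lam i j))
              = ∑ j, ((p i * (-(β * E i) - Real.log Zt)) * r j
                + p i * (r j * (-(β * q j) - Real.log (Zpart β HB))))
            from Finset.sum_congr rfl fun j _ => key i j]
          rw [Finset.sum_add_distrib, ← Finset.mul_sum, ← Finset.mul_sum]
      _ = (∑ i, p i * (-(β * E i) - Real.log Zt))
            + (∑ i, p i) * (∑ j, r j * (-(β * q j) - Real.log (Zpart β HB))) := by
          rw [hrsum, Finset.sum_add_distrib, Finset.sum_mul]
          simp [mul_one]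
      _ = -(Real.log Zt + Real.log (Zpart β HB) + β * (∑ i, p i * E i) + β * (∑ j, r j * q j)) := by
          rw [hpsum, one_mul]
          have h1 : (∑ i, p i * (-(β * E i) - Real.log Zt))
              = -β * (∑ i, p i * E i) - Real.log Zt := by
            have : (∑ i, p i * (-(β * E i) - Real.log Zt))
                = ∑ i, ((-β) * (p i * E i) + (-Real.log Zt) * p i) := by
              refine Finset.sum_congr rfl fun i _ => by ring
            rw [this, Finset.sum_add_distrib, ← Finset.mul_sum, ← Finset.mul_sum, hpsum]
            ring
          have h2 : (∑ j, r j * (-(β * q j) - Real.log (Zpart β HB)))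
              = -β * (∑ j, r j * q j) - Real.log (Zpart β HB) := by
            have : (∑ j, r j * (-(β * q j) - Real.log (Zpart β HB)))
                = ∑ j, ((-β) * (r j * q j) + (-Real.log (Zpart β HB)) * r j) := by
              refine Finset.sum_congr rfl fun j _ => by ring
            rw [this, Finset.sum_add_distrib, ← Finset.mul_sum, ← Finset.mul_sum, hrsum]
            ring
          rw [h1, h2]; ring
  rw [hsum, htr1, htr2]
  ring
end
end

section
/- (Modified quantum Jarzynski equality for the guessed quantum work, Theorem 1.) The one-time-measurement average of the exponentiated guessed quantum work satisfies Σ_i (exp(−β ε_i)/Z_S0)·exp(−β W̃(i)) = exp(−β ΔF_S)·exp(−D). -/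
open Matrix Kronecker BigOperators Finset

noncomputable section

lemma jar_spectral {k : ℕ} (β : ℝ) (H : Matrix (Fin k) (Fin k) ℂ)
    (f : Fin k → Fin k → ℂ) (q : Fin k → ℝ)
    (hf : ∀ j j', ∑ x, (starRingEnd ℂ) (f j x) * f j' x = if j = j' then 1 else 0)
    (hfeig : ∀ j, H *ᵥ f j = (q j : ℂ) • f j) :
    (NormedSpace.exp ((-β) • H)).trace = ((∑ j, Real.exp (-(β * q j)) : ℝ) : ℂ) ∧
    (H * NormedSpace.exp ((-β) • H)).trace
      = ((∑ j, q j * Real.exp (-(β * q j)) : ℝ) : ℂ) := by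
  classical
  let V : Matrix (Fin k) (Fin k) ℂ := Matrix.of fun x j => f j x
  have hVhV : Vᴴ * V = 1 := by
    ext j j'
    simpa [Matrix.mul_apply, Matrix.conjTranspose_apply, Matrix.one_apply, V] using hf j j'
  have hVVh : V * Vᴴ = 1 := mul_eq_one_comm.mp hVhV
  set d : Fin k → ℂ := fun j => ((-(β * q j) : ℝ) : ℂ) with hd
  have hHV : H * V = V * Matrix.diagonal (fun j => (q j : ℂ)) := by
    ext x j
    have h := congrFun (hfeig j) x
    simp only [Matrix.mulVec, dotProduct, Pi.smul_apply, smul_eq_mul] at h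
    rw [Matrix.mul_apply, Matrix.mul_diagonal]
    simp only [Matrix.of_apply, V]
    rw [h]; ring
  have hH : H = V * Matrix.diagonal (fun j => (q j : ℂ)) * Vᴴ := by
    calc H = H * (V * Vᴴ) := by rw [hVVh, Matrix.mul_one]
    _ = (H * V) * Vᴴ := by rw [Matrix.mul_assoc]
    _ = _ := by rw [hHV]
  have hsm : (-β) • H = V * Matrix.diagonal d * Vᴴ := by
    have hdq : (-β) • (Matrix.diagonal (fun j => (q j : ℂ))) = Matrix.diagonal d := by
      ext a b
      simp only [Matrix.smul_apply, Matrix.diagonal_apply, hd]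
      by_cases h : a = b
      · simp only [h, if_true, Complex.real_smul]; push_cast; ring
      · simp [h]
    rw [hH, ← Matrix.smul_mul, ← Matrix.mul_smul, hdq]
  let uV : (Matrix (Fin k) (Fin k) ℂ)ˣ := ⟨V, Vᴴ, hVVh, hVhV⟩
  have hexp : NormedSpace.exp ((-β) • H)
      = V * Matrix.diagonal (fun j => Complex.exp (d j)) * Vᴴ := by
    rw [hsm]
    have h2 := Matrix.exp_units_conj uV (Matrix.diagonal d)
    have hval : ((uV : (Matrix (Fin k) (Fin k) ℂ)ˣ) : Matrix (Fin k) (Fin k) ℂ) = V := rfl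
    have hinv : ((uV⁻¹ : (Matrix (Fin k) (Fin k) ℂ)ˣ) : Matrix (Fin k) (Fin k) ℂ) = Vᴴ := rfl
    rw [hval, hinv] at h2
    rw [h2, Matrix.exp_diagonal, Pi.exp_def]
    simp [← Complex.exp_eq_exp_ℂ]
  have key : ∀ (D₁ D₂ : Matrix (Fin k) (Fin k) ℂ),
      (V * D₁ * Vᴴ) * (V * D₂ * Vᴴ) = V * (D₁ * D₂) * Vᴴ := by
    intro D₁ D₂
    calc (V * D₁ * Vᴴ) * (V * D₂ * Vᴴ) = V * (D₁ * ((Vᴴ * V) * (D₂ * Vᴴ))) := by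
          simp only [Matrix.mul_assoc]
    _ = V * (D₁ * (D₂ * Vᴴ)) := by rw [hVhV, Matrix.one_mul]
    _ = V * (D₁ * D₂) * Vᴴ := by simp only [Matrix.mul_assoc]
  have htrd : ∀ (D : Matrix (Fin k) (Fin k) ℂ), (V * D * Vᴴ).trace = D.trace := by
    intro D
    rw [Matrix.trace_mul_cycle, hVhV, Matrix.one_mul]
  constructor
  · rw [hexp, htrd, Matrix.trace_diagonal]
    push_cast [← Complex.ofReal_exp]
    refine Finset.sum_congr rfl fun x _ => ?_
    simp only [hd]
    rw [← Complex.ofReal_exp]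
  · rw [hexp, hH, key, Matrix.diagonal_mul_diagonal, htrd, Matrix.trace_diagonal]
    push_cast [← Complex.ofReal_exp]
    refine Finset.sum_congr rfl fun x _ => ?_
    simp only [hd]
    rw [← Complex.ofReal_exp]

lemma jar_trace_exp_pos {k : ℕ} (hk : 1 ≤ k) (β : ℝ) (H : Matrix (Fin k) (Fin k) ℂ)
    (hH : H.IsHermitian) : 0 < (NormedSpace.exp ((-β) • H)).trace.re := by
  classical
  haveI : Nonempty (Fin k) := ⟨⟨0, hk⟩⟩
  set A := NormedSpace.exp (((-β)/2) • H) with hA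
  have hsplit : (-β) • H = ((-β)/2) • H + ((-β)/2) • H := by
    rw [← add_smul]; norm_num
  have hAA : NormedSpace.exp ((-β) • H) = A * A := by
    rw [hsplit, Matrix.exp_add_of_commute _ _ (Commute.refl _)]
  have hAH : Aᴴ = A := by
    rw [hA, ← Matrix.exp_conjTranspose]
    congr 1
    ext i j
    simp only [Matrix.conjTranspose_apply, Matrix.smul_apply, star_smul, star_trivial]
    rw [hH.apply i j]
  have hz : ∀ a b, A a b = star (A b a) := fun a b => by
    have h1 := congrFun (congrFun hAH a) b
    simpa [Matrix.conjTranspose_apply] using h1.symm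
  have hAunit : IsUnit A := Matrix.isUnit_exp _
  haveI : Nontrivial (Matrix (Fin k) (Fin k) ℂ) :=
    ⟨⟨0, 1, fun h => by simpa [Matrix.one_apply] using congrFun (congrFun h ⟨0, hk⟩) ⟨0, hk⟩⟩⟩
  have hAne : A ≠ 0 := hAunit.ne_zero
  obtain ⟨i0, j0, hij⟩ : ∃ i j, A i j ≠ 0 := by
    by_contra h
    push_neg at h
    exact hAne (by ext i j; simp [h i j])
  have htr : (NormedSpace.exp ((-β) • H)).trace.re = ∑ i, ∑ j, Complex.normSq (A i j) := by
    rw [hAA, Matrix.trace]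
    simp only [Matrix.diag_apply, Matrix.mul_apply]
    rw [Complex.re_sum]
    refine Finset.sum_congr rfl fun i _ => ?_
    rw [Complex.re_sum]
    refine Finset.sum_congr rfl fun j _ => ?_
    rw [hz j i]
    simp [Complex.star_def, Complex.mul_conj]
  rw [htr]
  refine Finset.sum_pos' (fun i _ => Finset.sum_nonneg fun j _ => Complex.normSq_nonneg _) ?_
  refine ⟨i0, Finset.mem_univ _, ?_⟩
  refine Finset.sum_pos' (fun j _ => Complex.normSq_nonneg _) ⟨j0, Finset.mem_univ _, ?_⟩
  exact Complex.normSq_pos.mpr hij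

lemma jar_trace_kron_one {n m : ℕ} (A : Matrix (Fin n) (Fin n) ℂ)
    (X : Matrix (Fin n × Fin m) (Fin n × Fin m) ℂ) :
    (((A ⊗ₖ (1 : Matrix (Fin m) (Fin m) ℂ)) * X).trace)
      = (A * (Matrix.of fun i i' => ∑ j, X (i, j) (i', j))).trace := by
  classical
  have hR : (A * (Matrix.of fun i i' => ∑ j, X (i, j) (i', j))).trace
      = ∑ i, ∑ i', ∑ j, A i i' * X (i', j) (i, j) := by
    rw [Matrix.trace]
    simp only [Matrix.diag_apply, Matrix.mul_apply, Matrix.of_apply, Finset.mul_sum]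
  have hL : (((A ⊗ₖ (1 : Matrix (Fin m) (Fin m) ℂ)) * X).trace)
      = ∑ i, ∑ j, ∑ i', A i i' * X (i', j) (i, j) := by
    rw [Matrix.trace]
    simp only [Matrix.diag_apply, Matrix.mul_apply, kroneckerMap_apply, Matrix.one_apply,
      Fintype.sum_prod_type]
    refine Finset.sum_congr rfl fun i _ => Finset.sum_congr rfl fun j _ =>
      Finset.sum_congr rfl fun i' _ => ?_
    simp [mul_ite, ite_mul, Finset.sum_ite_eq]
  rw [hL, hR]
  refine Finset.sum_congr rfl fun i _ => ?_
  rw [Finset.sum_comm]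

theorem modified_jarzynski_guessed_work
    (n m : ℕ) (hn : 1 ≤ n) (hm : 1 ≤ m)
    (β : ℝ) (hβ : 0 < β)
    (HS0 HSt : Matrix (Fin n) (Fin n) ℂ)
    (hHS0 : HS0.IsHermitian) (hHSt : HSt.IsHermitian)
    (HB : Matrix (Fin m) (Fin m) ℂ) (hHB : HB.IsHermitian)
    (e : Fin n → Fin n → ℂ) (ε : Fin n → ℝ)
    (he : ∀ i i', ∑ x, (starRingEnd ℂ) (e i x) * e i' x = if i = i' then 1 else 0)
    (heig : ∀ i, HS0 *ᵥ e i = (ε i : ℂ) • e i)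
    (f : Fin m → Fin m → ℂ) (q : Fin m → ℝ)
    (hf : ∀ j j', ∑ x, (starRingEnd ℂ) (f j x) * f j' x = if j = j' then 1 else 0)
    (hfeig : ∀ j, HB *ᵥ f j = (q j : ℂ) • f j)
    (U : Matrix (Fin n × Fin m) (Fin n × Fin m) ℂ)
    (hU : U ∈ Matrix.unitaryGroup (Fin n × Fin m) ℂ)
    (E : Fin n → ℝ)
    (hE : ∀ i, E i = ((HSt * channel U (gibbs β HB) (outer (e i))).trace).re)
    (Zt : ℝ) (hZt : Zt = ∑ i, Real.exp (-(β * E i)))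
    (p : Fin n → ℝ) (hp : ∀ i, p i = Real.exp (-(β * E i)) / Zt)
    (Θ : Matrix (Fin n × Fin m) (Fin n × Fin m) ℂ)
    (hΘ : Θ = ∑ i, (p i : ℂ) • (U * (outer (e i) ⊗ₖ gibbs β HB) * Uᴴ))
    (lam : Fin n → Fin m → ℝ)
    (hlam : ∀ i j, lam i j = p i * Real.exp (-(β * q j)) / Zpart β HB)
    (Qg : ℝ)
    (hQg : Qg = ((HB * gibbs β HB).trace).re
      - ((((1 : Matrix (Fin n) (Fin n) ℂ) ⊗ₖ HB) * Θ).trace).re)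
    (Wg : Fin n → ℝ) (hWg : ∀ i, Wg i = (E i - ε i) - Qg)
    (D : ℝ)
    (hD : D = (∑ i, ∑ j, lam i j * Real.log (lam i j))
      + β * (((HSt ⊗ₖ (1 : Matrix (Fin m) (Fin m) ℂ)) * Θ).trace).re
      + β * ((((1 : Matrix (Fin n) (Fin n) ℂ) ⊗ₖ HB) * Θ).trace).re
      + Real.log (Zpart β HSt * Zpart β HB))
    (ΔF : ℝ) (hΔF : ΔF = -(β⁻¹ * Real.log (Zpart β HSt / Zpart β HS0))) :
    ∑ i, (Real.exp (-(β * ε i)) / Zpart β HS0) * Real.exp (-(β * Wg i))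
      = Real.exp (-(β * ΔF)) * Real.exp (-D) := by
  classical
  haveI : Nonempty (Fin n) := ⟨⟨0, hn⟩⟩
  haveI : Nonempty (Fin m) := ⟨⟨0, hm⟩⟩
  obtain ⟨hBtr, hBqtr⟩ := jar_spectral β HB f q hf hfeig
  obtain ⟨hS0tr, -⟩ := jar_spectral β HS0 e ε he heig
  have hZ0 : Zpart β HS0 = ∑ i, Real.exp (-(β * ε i)) := by
    simp only [Zpart]; rw [hS0tr, Complex.ofReal_re]
  have hZB : Zpart β HB = ∑ j, Real.exp (-(β * q j)) := by
    simp only [Zpart]; rw [hBtr, Complex.ofReal_re]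
  have hZ0pos : 0 < Zpart β HS0 := by
    rw [hZ0]; exact Finset.sum_pos (fun _ _ => Real.exp_pos _) Finset.univ_nonempty
  have hZBpos : 0 < Zpart β HB := by
    rw [hZB]; exact Finset.sum_pos (fun _ _ => Real.exp_pos _) Finset.univ_nonempty
  have hZstpos : 0 < Zpart β HSt := by
    simpa [Zpart] using jar_trace_exp_pos hn β HSt hHSt
  have hZtpos : 0 < Zt := by
    rw [hZt]; exact Finset.sum_pos (fun _ _ => Real.exp_pos _) Finset.univ_nonempty
  have hppos : ∀ i, 0 < p i := fun i => by
    rw [hp i]; exact div_pos (Real.exp_pos _) hZtpos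
  have hpsum : ∑ i, p i = 1 := by
    calc ∑ i, p i = (∑ i, Real.exp (-(β * E i))) / Zt := by
          rw [Finset.sum_div]
          exact Finset.sum_congr rfl fun i _ => hp i
    _ = 1 := by rw [← hZt, div_self hZtpos.ne']
  -- the Gibbs energy of the bath
  have hc : ((HB * gibbs β HB).trace).re
      = (∑ j, q j * Real.exp (-(β * q j))) / Zpart β HB := by
    simp only [gibbs]
    rw [Matrix.mul_smul, Matrix.trace_smul, hBqtr, smul_eq_mul, ← Complex.ofReal_inv,
      ← Complex.ofReal_mul, Complex.ofReal_re, inv_mul_eq_div]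
  -- the system energy term
  have hT1 : (((HSt ⊗ₖ (1 : Matrix (Fin m) (Fin m) ℂ)) * Θ).trace).re = ∑ i, p i * E i := by
    rw [hΘ, Matrix.mul_sum, Matrix.trace_sum, Complex.re_sum]
    refine Finset.sum_congr rfl fun i _ => ?_
    rw [Matrix.mul_smul, Matrix.trace_smul, smul_eq_mul, jar_trace_kron_one]
    have hch : (Matrix.of fun a a' => ∑ j, (U * (outer (e i) ⊗ₖ gibbs β HB) * Uᴴ) (a, j) (a', j))
        = channel U (gibbs β HB) (outer (e i)) := rfl
    rw [hch, show ((p i : ℂ) * (HSt * channel U (gibbs β HB) (outer (e i))).trace).re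
        = p i * ((HSt * channel U (gibbs β HB) (outer (e i))).trace).re from by
      simp [Complex.mul_re], ← hE i]
  -- the entropy sum
  have hlog : ∀ i j, Real.log (lam i j)
      = (-(β * E i) - Real.log Zt) + (-(β * q j)) - Real.log (Zpart β HB) := by
    intro i j
    have h1 : (0:ℝ) < Real.exp (-(β * E i)) / Zt := div_pos (Real.exp_pos _) hZtpos
    rw [hlam i j, hp i,
      Real.log_div (mul_pos h1 (Real.exp_pos _)).ne' hZBpos.ne',
      Real.log_mul h1.ne' (Real.exp_pos _).ne',
      Real.log_div (Real.exp_pos _).ne' hZtpos.ne',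
      Real.log_exp, Real.log_exp]
  have hterm : ∀ i j, lam i j * Real.log (lam i j)
      = (p i * ((-(β * E i) - Real.log Zt) - Real.log (Zpart β HB)) / Zpart β HB)
          * Real.exp (-(β * q j))
        - (p i * β / Zpart β HB) * (q j * Real.exp (-(β * q j))) := by
    intro i j; rw [hlog i j, hlam i j]; ring
  have hinner : ∀ i, ∑ j, lam i j * Real.log (lam i j)
      = p i * ((-(β * E i) - Real.log Zt) - Real.log (Zpart β HB))
        - p i * (β * ((∑ j, q j * Real.exp (-(β * q j))) / Zpart β HB)) := by
    intro i
    rw [Finset.sum_congr rfl fun j _ => hterm i j, Finset.sum_sub_distrib,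
      ← Finset.mul_sum, ← Finset.mul_sum, ← hZB]
    field_simp
  have hSsum : ∑ i, ∑ j, lam i j * Real.log (lam i j)
      = -(β * ∑ i, p i * E i) - Real.log Zt - Real.log (Zpart β HB)
        - β * ((∑ j, q j * Real.exp (-(β * q j))) / Zpart β HB) := by
    rw [Finset.sum_congr rfl fun i _ => hinner i, Finset.sum_sub_distrib]
    have h1 : ∑ i, p i * ((-(β * E i) - Real.log Zt) - Real.log (Zpart β HB))
        = -(β * ∑ i, p i * E i) - (Real.log Zt + Real.log (Zpart β HB)) := by
      have h0 : ∀ i, p i * ((-(β * E i) - Real.log Zt) - Real.log (Zpart β HB))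
          = -(β * (p i * E i)) - p i * (Real.log Zt + Real.log (Zpart β HB)) := fun i => by ring
      rw [Finset.sum_congr rfl fun i _ => h0 i, Finset.sum_sub_distrib,
        ← Finset.sum_mul, hpsum, one_mul]
      congr 1
      rw [Finset.sum_neg_distrib, ← Finset.mul_sum]
    have h2 : ∑ i, p i * (β * ((∑ j, q j * Real.exp (-(β * q j))) / Zpart β HB))
        = β * ((∑ j, q j * Real.exp (-(β * q j))) / Zpart β HB) := by
      rw [← Finset.sum_mul, hpsum, one_mul]
    rw [h1, h2]; ring
  -- the key identity
  have hkey : D = Real.log (Zpart β HSt) - Real.log Zt - β * Qg := by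
    rw [hD, hSsum, hT1, hQg, hc, Real.log_mul hZstpos.ne' hZBpos.ne']
    ring
  -- finish
  have hexpD : Real.exp (-D) = Zt * Real.exp (β * Qg) / Zpart β HSt := by
    rw [hkey, show -(Real.log (Zpart β HSt) - Real.log Zt - β * Qg)
        = (Real.log Zt + β * Qg) - Real.log (Zpart β HSt) by ring,
      Real.exp_sub, Real.exp_add, Real.exp_log hZtpos, Real.exp_log hZstpos]
  have hexpF : Real.exp (-(β * ΔF)) = Zpart β HSt / Zpart β HS0 := by
    rw [hΔF, show -(β * -(β⁻¹ * Real.log (Zpart β HSt / Zpart β HS0)))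
        = Real.log (Zpart β HSt / Zpart β HS0) from by field_simp]
    exact Real.exp_log (div_pos hZstpos hZ0pos)
  calc ∑ i, (Real.exp (-(β * ε i)) / Zpart β HS0) * Real.exp (-(β * Wg i))
      = ∑ i, Real.exp (-(β * E i)) * Real.exp (β * Qg) / Zpart β HS0 := by
        refine Finset.sum_congr rfl fun i _ => ?_
        rw [hWg i, div_mul_eq_mul_div, ← Real.exp_add,
          show -(β * ε i) + -(β * ((E i - ε i) - Qg)) = -(β * E i) + β * Qg by ring,
          Real.exp_add]
    _ = Zt * Real.exp (β * Qg) / Zpart β HS0 := by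
        rw [← Finset.sum_div, ← Finset.sum_mul, ← hZt]
    _ = Real.exp (-(β * ΔF)) * Real.exp (-D) := by
        rw [hexpF, hexpD]
        field_simp
end
end

section
/- (Maximum-entropy characterization of the best possible guessed state.) Let π_j = exp(−β q_j)/Z_B. For every probability distribution r on Fin n (r(i) ≥ 0, Σ_i r(i) = 1) satisfying the energy constraint Σ_i r(i) E(i) = Σ_i p(i) E(i), the von Neumann entropy of the corresponding guessed state Θ_r = Σ_i r(i) U (|e_i⟩⟨e_i| ⊗ τ_B) U†, which equals −Σ_{i,j} r(i)π_j ln(r(i)π_j), satisfies −Σ_{i,j} r(i)π_j ln(r(i)π_j) ≤ −Σ_{i,j} p(i)π_j ln(p(i)π_j) (with the convention 0·ln 0 = 0). -/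
open Matrix Kronecker BigOperators Finset

noncomputable section

/-- The partition function of a Hermitian matrix is positive. -/
lemma Zpart_pos {k : ℕ} (hk : 1 ≤ k) (β : ℝ) (H : Matrix (Fin k) (Fin k) ℂ)
    (hH : H.IsHermitian) : 0 < Zpart β H := by
  haveI : NeZero k := ⟨by omega⟩
  set C : Matrix (Fin k) (Fin k) ℂ := (-β) • H with hC
  have hCh : C.IsHermitian := by
    unfold Matrix.IsHermitian
    rw [hC, conjTranspose_smul, hH.eq]
    simp
  set D : Matrix (Fin k) (Fin k) ℂ := (1/2 : ℝ) • C with hD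
  have hDh : D.IsHermitian := by
    unfold Matrix.IsHermitian
    rw [hD, conjTranspose_smul, hCh.eq]
    simp
  have hCDD : C = D + D := by
    rw [hD, ← add_smul]; norm_num
  set B := NormedSpace.exp D with hB
  have hBh : B.IsHermitian := hDh.exp
  have hsplit : NormedSpace.exp C = B * B := by
    rw [hCDD, Matrix.exp_add_of_commute D D (Commute.refl D)]
  have hinv : B * NormedSpace.exp (-D) = 1 := by
    rw [hB, ← Matrix.exp_add_of_commute D (-D) (Commute.neg_right (Commute.refl D))]
    simp [NormedSpace.exp_zero]
  have i0 : Fin k := ⟨0, by omega⟩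
  have hBnz : ∃ j, B i0 j ≠ 0 := by
    by_contra h
    push_neg at h
    have : (B * NormedSpace.exp (-D)) i0 i0 = 0 := by
      simp [Matrix.mul_apply, h]
    rw [hinv] at this
    simp at this
  obtain ⟨j0, hj0⟩ := hBnz
  have htr : Zpart β H = ∑ i, ∑ j, Complex.normSq (B j i) := by
    unfold Zpart
    rw [← hC, hsplit]
    have : (B * B).trace = ∑ i, ∑ j, (B i j * B j i) := by
      simp [Matrix.trace, Matrix.mul_apply, Matrix.diag]
    rw [this]
    rw [Complex.re_sum]
    congr 1; ext i
    rw [Complex.re_sum]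
    congr 1; ext j
    have hBij : B i j = (starRingEnd ℂ) (B j i) := by
      conv_lhs => rw [← hBh.eq]
      simp [Matrix.conjTranspose_apply]
    rw [hBij, mul_comm, Complex.mul_conj]
    simp
  rw [htr]
  have hle : Complex.normSq (B i0 j0) ≤ ∑ i, ∑ j, Complex.normSq (B j i) := by
    calc Complex.normSq (B i0 j0) ≤ ∑ j, Complex.normSq (B j j0) :=
          Finset.single_le_sum (f := fun j => Complex.normSq (B j j0))
            (fun j _ => Complex.normSq_nonneg _) (mem_univ i0)
      _ ≤ ∑ i, ∑ j, Complex.normSq (B j i) :=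
          Finset.single_le_sum (f := fun i => ∑ j, Complex.normSq (B j i))
            (fun i _ => Finset.sum_nonneg fun j _ => Complex.normSq_nonneg _) (mem_univ j0)
  have : 0 < Complex.normSq (B i0 j0) := Complex.normSq_pos.mpr hj0
  linarith

/-- Splitting of the entropy sum of a product distribution. -/
lemma entropy_split {n m : ℕ} (π : Fin m → ℝ) (s : Fin n → ℝ)
    (hπ : ∀ j, π j ≠ 0) (hs1 : ∑ i, s i = 1) :
    ∑ i, ∑ j, (s i * π j) * Real.log (s i * π j)
      = (∑ j, π j) * (∑ i, s i * Real.log (s i)) + ∑ j, π j * Real.log (π j) := by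
  calc ∑ i, ∑ j, (s i * π j) * Real.log (s i * π j)
      = ∑ i, ∑ j, (π j * (s i * Real.log (s i)) + s i * (π j * Real.log (π j))) := by
        refine Finset.sum_congr rfl fun i _ => Finset.sum_congr rfl fun j _ => ?_
        by_cases hsi : s i = 0
        · simp [hsi]
        · rw [Real.log_mul hsi (hπ j)]; ring
    _ = ∑ i, ((∑ j, π j) * (s i * Real.log (s i)) + s i * (∑ j, π j * Real.log (π j))) := by
        refine Finset.sum_congr rfl fun i _ => ?_
        rw [Finset.sum_add_distrib, ← Finset.sum_mul, ← Finset.mul_sum]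
    _ = (∑ j, π j) * (∑ i, s i * Real.log (s i))
          + (∑ i, s i) * (∑ j, π j * Real.log (π j)) := by
        rw [Finset.sum_add_distrib, ← Finset.mul_sum, ← Finset.sum_mul]
    _ = (∑ j, π j) * (∑ i, s i * Real.log (s i)) + ∑ j, π j * Real.log (π j) := by
        rw [hs1, one_mul]

/-- Gibbs variational principle for finite distributions. -/
lemma gibbs_core {n : ℕ} (hn : 1 ≤ n) (β : ℝ) (E : Fin n → ℝ) (Zt : ℝ)
    (hZt : Zt = ∑ i, Real.exp (-(β * E i)))
    (p : Fin n → ℝ) (hp : ∀ i, p i = Real.exp (-(β * E i)) / Zt)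
    (r : Fin n → ℝ) (hr0 : ∀ i, 0 ≤ r i) (hr1 : ∑ i, r i = 1)
    (hrE : ∑ i, r i * E i = ∑ i, p i * E i) :
    ∑ i, p i * Real.log (p i) ≤ ∑ i, r i * Real.log (r i) := by
  haveI : NeZero n := ⟨by omega⟩
  have hZtpos : 0 < Zt := by
    rw [hZt]; exact Finset.sum_pos (fun i _ => Real.exp_pos _) Finset.univ_nonempty
  have hppos : ∀ i, 0 < p i := fun i => by rw [hp]; positivity
  have hpsum : ∑ i, p i = 1 := by
    simp only [hp]
    rw [← Finset.sum_div, ← hZt, div_self hZtpos.ne']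
  have hlogp : ∀ i, Real.log (p i) = -(β * E i) - Real.log Zt := fun i => by
    rw [hp, Real.log_div (Real.exp_ne_zero _) hZtpos.ne', Real.log_exp]
  have haux : ∀ s : Fin n → ℝ, (∑ i, s i = 1) →
      ∑ i, s i * Real.log (p i) = -(β * (∑ i, s i * E i)) - Real.log Zt := by
    intro s hs
    calc ∑ i, s i * Real.log (p i)
        = ∑ i, (-(β * (s i * E i)) - s i * Real.log Zt) := by
          refine Finset.sum_congr rfl fun i _ => ?_
          rw [hlogp i]; ring
      _ = -(∑ i, β * (s i * E i)) - ∑ i, s i * Real.log Zt := by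
          rw [Finset.sum_sub_distrib, Finset.sum_neg_distrib]
      _ = -(β * (∑ i, s i * E i)) - (∑ i, s i) * Real.log Zt := by
          rw [← Finset.mul_sum, ← Finset.sum_mul]
      _ = -(β * (∑ i, s i * E i)) - Real.log Zt := by rw [hs, one_mul]
  have h1 : ∑ i, p i * Real.log (p i) = ∑ i, r i * Real.log (p i) := by
    rw [haux p hpsum, haux r hr1, hrE]
  have h2 : ∑ i, r i * Real.log (p i) ≤ ∑ i, (r i * Real.log (r i) + (p i - r i)) := by
    refine Finset.sum_le_sum fun i _ => ?_
    rcases eq_or_lt_of_le (hr0 i) with h | h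
    · rw [← h]; simpa using (hppos i).le
    · have hlog := Real.log_le_sub_one_of_pos (div_pos (hppos i) h)
      rw [Real.log_div (hppos i).ne' h.ne'] at hlog
      have hm := mul_le_mul_of_nonneg_left hlog h.le
      have hc : r i * (p i / r i) = p i := by field_simp
      rw [mul_sub, mul_sub, hc, mul_one] at hm
      linarith
  have h3 : ∑ i, (r i * Real.log (r i) + (p i - r i)) = ∑ i, r i * Real.log (r i) := by
    rw [Finset.sum_add_distrib, Finset.sum_sub_distrib, hpsum, hr1]
    ring
  linarith [h1, h2, h3.symm ▸ h2]

theorem max_entropy_characterization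
    (n m : ℕ) (hn : 1 ≤ n) (hm : 1 ≤ m)
    (β : ℝ) (hβ : 0 < β)
    (HS0 HSt : Matrix (Fin n) (Fin n) ℂ)
    (hHS0 : HS0.IsHermitian) (hHSt : HSt.IsHermitian)
    (HB : Matrix (Fin m) (Fin m) ℂ) (hHB : HB.IsHermitian)
    (e : Fin n → Fin n → ℂ) (ε : Fin n → ℝ)
    (he : ∀ i i', ∑ x, (starRingEnd ℂ) (e i x) * e i' x = if i = i' then 1 else 0)
    (heig : ∀ i, HS0 *ᵥ e i = (ε i : ℂ) • e i)
    (f : Fin m → Fin m → ℂ) (q : Fin m → ℝ)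
    (hf : ∀ j j', ∑ x, (starRingEnd ℂ) (f j x) * f j' x = if j = j' then 1 else 0)
    (hfeig : ∀ j, HB *ᵥ f j = (q j : ℂ) • f j)
    (U : Matrix (Fin n × Fin m) (Fin n × Fin m) ℂ)
    (hU : U ∈ Matrix.unitaryGroup (Fin n × Fin m) ℂ)
    (E : Fin n → ℝ)
    (hE : ∀ i, E i = ((HSt * channel U (gibbs β HB) (outer (e i))).trace).re)
    (Zt : ℝ) (hZt : Zt = ∑ i, Real.exp (-(β * E i)))
    (p : Fin n → ℝ) (hp : ∀ i, p i = Real.exp (-(β * E i)) / Zt)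
    (π : Fin m → ℝ) (hπ : ∀ j, π j = Real.exp (-(β * q j)) / Zpart β HB)
    (r : Fin n → ℝ) (hr0 : ∀ i, 0 ≤ r i) (hr1 : ∑ i, r i = 1)
    (hrE : ∑ i, r i * E i = ∑ i, p i * E i) :
    -(∑ i, ∑ j, (r i * π j) * Real.log (r i * π j))
      ≤ -(∑ i, ∑ j, (p i * π j) * Real.log (p i * π j)) := by
  haveI : NeZero n := ⟨by omega⟩
  have hZB : 0 < Zpart β HB := Zpart_pos hm β HB hHB
  have hπpos : ∀ j, 0 < π j := fun j => by rw [hπ]; positivity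
  have hπne : ∀ j, π j ≠ 0 := fun j => (hπpos j).ne'
  have hZtpos : 0 < Zt := by
    rw [hZt]; exact Finset.sum_pos (fun i _ => Real.exp_pos _) Finset.univ_nonempty
  have hpsum : ∑ i, p i = 1 := by
    simp only [hp]
    rw [← Finset.sum_div, ← hZt, div_self hZtpos.ne']
  have hSπ : 0 ≤ ∑ j, π j := Finset.sum_nonneg fun j _ => (hπpos j).le
  rw [entropy_split π r hπne hr1, entropy_split π p hπne hpsum]
  have key : ∑ i, p i * Real.log (p i) ≤ ∑ i, r i * Real.log (r i) :=
    gibbs_core hn β E Zt hZt p hp r hr0 hr1 hrE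
  have := mul_le_mul_of_nonneg_left key hSπ
  linarith
end
end

section
/- (Closed-system recovery.) Suppose U = U_S ⊗ U_B where U_S is an n×n unitary, U_B is an m×m unitary, and U_B commutes with H_B. Then Φ(ρ) = U_S ρ U_S† for every n×n matrix ρ, and the guessed quantum heat vanishes: Q̃ = 0. -/
/-!
If `U = U_S ⊗ U_B` and `U_B` commutes with `H_B`, then `U_B` commutes with `τ_B = exp(-β H_B)/Z_B`,
so `U (ρ ⊗ τ_B) U† = (U_S ρ U_S†) ⊗ τ_B`. Since `Tr τ_B = 1` (the trace of the exponential of a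
Hermitian matrix is positive), tracing out the bath leaves `U_S ρ U_S†`. Likewise the guessed state is
`Θ = σ ⊗ τ_B` with `Tr σ = Σ p(i) = 1`, so its bath energy is exactly `Tr[H_B τ_B]` and `Q̃ = 0`.
-/

open Matrix Kronecker BigOperators Finset

noncomputable section

open scoped ComplexOrder

namespace Matrix

variable {ι κ : Type*} [Fintype ι] [Fintype κ]

theorem IsHermitian.trace_exp_pos [DecidableEq ι] [Nonempty ι] {A : Matrix ι ι ℂ}
    (hA : A.IsHermitian) : 0 < (NormedSpace.exp A).trace := by
  set B := NormedSpace.exp ((1 / 2 : ℝ) • A)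
  have hB : Bᴴ * B = NormedSpace.exp A := by
    rw [(hA.smul (IsSelfAdjoint.all (1 / 2 : ℝ))).exp.eq, ← exp_add_of_commute _ _ (Commute.refl _),
      ← add_smul]
    norm_num
  rw [← hB]
  exact (PosDef.conjTranspose_mul_self B
    (mulVec_injective_iff_isUnit.mpr (isUnit_exp _))).trace_pos

theorem kronecker_conj_eq_of_commute {R : Type*} [CommRing R] [StarRing R] [DecidableEq κ]
    (U : Matrix ι ι R) {V τ : Matrix κ κ R} (hV : V ∈ unitaryGroup κ R) (hVτ : Commute V τ)
    (X : Matrix ι ι R) : (U ⊗ₖ V) * (X ⊗ₖ τ) * (U ⊗ₖ V)ᴴ = (U * X * Uᴴ) ⊗ₖ τ := by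
  have hVV : V * Vᴴ = 1 := mem_unitaryGroup_iff.mp hV
  rw [conjTranspose_kronecker, ← mul_kronecker_mul, ← mul_kronecker_mul, hVτ.eq,
    Matrix.mul_assoc τ, hVV, Matrix.mul_one]

theorem trace_one_kronecker_mul_kronecker {R : Type*} [CommRing R] [DecidableEq ι]
    (H τ : Matrix κ κ R) (X : Matrix ι ι R) :
    ((1 ⊗ₖ H) * (X ⊗ₖ τ)).trace = X.trace * (H * τ).trace := by
  rw [← mul_kronecker_mul, Matrix.one_mul, trace_kronecker]

end Matrix

section

variable {n m k : ℕ}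

theorem ptraceB_kronecker (A : Matrix (Fin n) (Fin n) ℂ) (B : Matrix (Fin m) (Fin m) ℂ) :
    ptraceB (A ⊗ₖ B) = B.trace • A := by
  ext i i'
  simp [ptraceB, trace, Finset.mul_sum, mul_comm]

theorem trace_outer (v : Fin k → ℂ) : (outer v).trace = ∑ x, star (v x) * v x := by
  simp [outer, trace, vecMulVec_apply, mul_comm]

theorem trace_gibbs [NeZero k] (β : ℝ) {H : Matrix (Fin k) (Fin k) ℂ} (hH : H.IsHermitian) :
    (gibbs β H).trace = 1 := by
  obtain ⟨hre, him⟩ := Complex.pos_iff.mp (hH.smul (IsSelfAdjoint.all (-β))).trace_exp_pos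
  -- `Zpart` keeps only the real part of the trace; positivity makes the imaginary part vanish.
  have hZ : (NormedSpace.exp ((-β) • H)).trace = (Zpart β H : ℂ) := Complex.ext rfl him.symm
  rw [gibbs, trace_smul, hZ, smul_eq_mul, inv_mul_cancel₀ (by exact_mod_cast hre.ne')]

theorem Commute.gibbs_right {W H : Matrix (Fin k) (Fin k) ℂ} (h : Commute W H) (β : ℝ) :
    Commute W (gibbs β H) :=
  ((h.smul_right (-β)).exp_right).smul_right _

theorem channel_kronecker_of_commute {US : Matrix (Fin n) (Fin n) ℂ}
    {UB τ : Matrix (Fin m) (Fin m) ℂ} (hτ : τ.trace = 1) (hUB : UB ∈ unitaryGroup (Fin m) ℂ)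
    (hcomm : Commute UB τ) (ρ : Matrix (Fin n) (Fin n) ℂ) :
    channel (US ⊗ₖ UB) τ ρ = US * ρ * USᴴ := by
  rw [channel, kronecker_conj_eq_of_commute US hUB hcomm, ptraceB_kronecker, hτ, one_smul]

end

theorem closed_system_recovery_general
    (n m : ℕ) (hn : 1 ≤ n) (hm : 1 ≤ m)
    (β : ℝ)
    (HB : Matrix (Fin m) (Fin m) ℂ) (hHB : HB.IsHermitian)
    (e : Fin n → Fin n → ℂ)
    (he : ∀ i i', ∑ x, (starRingEnd ℂ) (e i x) * e i' x = if i = i' then 1 else 0)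
    (U : Matrix (Fin n × Fin m) (Fin n × Fin m) ℂ)
    (E : Fin n → ℝ)
    (Zt : ℝ) (hZt : Zt = ∑ i, Real.exp (-(β * E i)))
    (p : Fin n → ℝ) (hp : ∀ i, p i = Real.exp (-(β * E i)) / Zt)
    (Θ : Matrix (Fin n × Fin m) (Fin n × Fin m) ℂ)
    (hΘ : Θ = ∑ i, (p i : ℂ) • (U * (outer (e i) ⊗ₖ gibbs β HB) * Uᴴ))
    (Qg : ℝ)
    (hQg : Qg = ((HB * gibbs β HB).trace).re
      - ((((1 : Matrix (Fin n) (Fin n) ℂ) ⊗ₖ HB) * Θ).trace).re)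
    (US : Matrix (Fin n) (Fin n) ℂ) (hUS : US ∈ Matrix.unitaryGroup (Fin n) ℂ)
    (UB : Matrix (Fin m) (Fin m) ℂ) (hUB : UB ∈ Matrix.unitaryGroup (Fin m) ℂ)
    (hUfact : U = US ⊗ₖ UB) (hUBcomm : UB * HB = HB * UB) :
    (∀ ρ : Matrix (Fin n) (Fin n) ℂ, channel U (gibbs β HB) ρ = US * ρ * USᴴ)
      ∧ Qg = 0 := by
  have : NeZero n := NeZero.of_pos hn
  have : NeZero m := NeZero.of_pos hm
  subst hUfact
  have hcomm : Commute UB (gibbs β HB) := Commute.gibbs_right hUBcomm β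
  refine ⟨channel_kronecker_of_commute (trace_gibbs β hHB) hUB hcomm, ?_⟩
  have hp_sum : ∑ i, (p i : ℂ) = 1 := by
    have hZt_pos : 0 < Zt := hZt ▸ Finset.sum_pos (fun _ _ => Real.exp_pos _) univ_nonempty
    simp only [hp, ← Complex.ofReal_sum, ← Finset.sum_div, ← hZt, div_self hZt_pos.ne',
      Complex.ofReal_one]
  have htr_conj : ∀ i, (US * outer (e i) * USᴴ).trace = 1 := fun i => by
    rw [trace_mul_cycle, ← star_eq_conjTranspose, mem_unitaryGroup_iff'.mp hUS, Matrix.one_mul,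
      trace_outer]
    exact (he i i).trans (if_pos rfl)
  have hheat : (((1 : Matrix (Fin n) (Fin n) ℂ) ⊗ₖ HB) * Θ).trace = (HB * gibbs β HB).trace := by
    simp only [hΘ, Finset.mul_sum, trace_sum, Matrix.mul_smul, trace_smul,
      kronecker_conj_eq_of_commute US hUB hcomm, trace_one_kronecker_mul_kronecker, htr_conj,
      one_mul, smul_eq_mul, ← Finset.sum_mul, hp_sum]
  rw [hQg, hheat, sub_self]

theorem closed_system_recovery
    (n m : ℕ) (hn : 1 ≤ n) (hm : 1 ≤ m)
    (β : ℝ) (hβ : 0 < β)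
    (HS0 HSt : Matrix (Fin n) (Fin n) ℂ)
    (hHS0 : HS0.IsHermitian) (hHSt : HSt.IsHermitian)
    (HB : Matrix (Fin m) (Fin m) ℂ) (hHB : HB.IsHermitian)
    (e : Fin n → Fin n → ℂ) (ε : Fin n → ℝ)
    (he : ∀ i i', ∑ x, (starRingEnd ℂ) (e i x) * e i' x = if i = i' then 1 else 0)
    (heig : ∀ i, HS0 *ᵥ e i = (ε i : ℂ) • e i)
    (U : Matrix (Fin n × Fin m) (Fin n × Fin m) ℂ)
    (hU : U ∈ Matrix.unitaryGroup (Fin n × Fin m) ℂ)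
    (E : Fin n → ℝ)
    (hE : ∀ i, E i = ((HSt * channel U (gibbs β HB) (outer (e i))).trace).re)
    (Zt : ℝ) (hZt : Zt = ∑ i, Real.exp (-(β * E i)))
    (p : Fin n → ℝ) (hp : ∀ i, p i = Real.exp (-(β * E i)) / Zt)
    (Θ : Matrix (Fin n × Fin m) (Fin n × Fin m) ℂ)
    (hΘ : Θ = ∑ i, (p i : ℂ) • (U * (outer (e i) ⊗ₖ gibbs β HB) * Uᴴ))
    (Qg : ℝ)
    (hQg : Qg = ((HB * gibbs β HB).trace).re
      - ((((1 : Matrix (Fin n) (Fin n) ℂ) ⊗ₖ HB) * Θ).trace).re)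
    (US : Matrix (Fin n) (Fin n) ℂ) (hUS : US ∈ Matrix.unitaryGroup (Fin n) ℂ)
    (UB : Matrix (Fin m) (Fin m) ℂ) (hUB : UB ∈ Matrix.unitaryGroup (Fin m) ℂ)
    (hUfact : U = US ⊗ₖ UB) (hUBcomm : UB * HB = HB * UB) :
    (∀ ρ : Matrix (Fin n) (Fin n) ℂ, channel U (gibbs β HB) ρ = US * ρ * USᴴ)
      ∧ Qg = 0 :=
  closed_system_recovery_general n m hn hm β HB hHB e he U E Zt hZt p hp Θ hΘ Qg hQg US hUS UB hUB
    hUfact hUBcomm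
end
end

section
/- (Pure dephasing: the guessed state is the exact state.) Suppose H_St = H_S0 and Φ(|e_i⟩⟨e_i|) = |e_i⟩⟨e_i| for every i. Then E(i) = ε_i for all i, Z̃ = Z_S0, and the best possible guessed state equals the exact evolved state: Θ = U (τ_S0 ⊗ τ_B) U†. -/
/-
Diagonalising H_S0 by the unitary whose columns are the e_i gives
exp(−βH_S0) = Σᵢ e^{−βεᵢ} |eᵢ⟩⟨eᵢ|, so τ_S0 has the eigenvalue weights e^{−βεᵢ}/Z_S0.
Under dephasing Φ fixes each |eᵢ⟩⟨eᵢ|, hence E(i) = ⟨eᵢ|H_S0|eᵢ⟩ = εᵢ; then Z̃ = Z_S0, the p(i)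
are exactly those weights, and Θ = U (τ_S0 ⊗ τ_B) U† by linearity of ρ ↦ U (ρ ⊗ τ_B) U†.
-/

open Matrix Kronecker BigOperators Finset

noncomputable section

lemma trace_mul_outer_of_mulVec_eq_smul {k : ℕ} {H : Matrix (Fin k) (Fin k) ℂ} {v : Fin k → ℂ}
    {μ : ℂ} (hv : H *ᵥ v = μ • v) : (H * outer v).trace = μ * (outer v).trace := by
  rw [outer, mul_vecMulVec, hv, smul_vecMulVec, trace_smul, smul_eq_mul]

theorem Matrix.sum_kronecker {ι l m n p α : Type*} [NonUnitalNonAssocSemiring α] (s : Finset ι)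
    (A : ι → Matrix l m α) (B : Matrix n p α) :
    (∑ i ∈ s, A i) ⊗ₖ B = ∑ i ∈ s, A i ⊗ₖ B := by
  ext ⟨a, b⟩ ⟨c, d⟩
  simp [Matrix.sum_apply, Finset.sum_mul]

section Spectral

variable {n : ℕ} {H : Matrix (Fin n) (Fin n) ℂ} {e : Fin n → Fin n → ℂ} {ε : Fin n → ℝ}

lemma trace_outer_of_orthonormal
    (he : ∀ i i', ∑ x, (starRingEnd ℂ) (e i x) * e i' x = if i = i' then 1 else 0) (i : Fin n) :
    (outer (e i)).trace = 1 := by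
  simpa [outer, dotProduct, mul_comm] using he i i

lemma conjTranspose_mul_self_of_orthonormal
    (he : ∀ i i', ∑ x, (starRingEnd ℂ) (e i x) * e i' x = if i = i' then 1 else 0) :
    ((of e)ᵀ)ᴴ * (of e)ᵀ = 1 := by
  ext i i'
  simpa [mul_apply, one_apply] using he i i'

lemma mul_eq_mul_diagonal_of_mulVec_eq_smul (heig : ∀ i, H *ᵥ e i = (ε i : ℂ) • e i) :
    H * (of e)ᵀ = (of e)ᵀ * diagonal (fun i => (ε i : ℂ)) := by
  ext x i
  rw [mul_diagonal]
  simpa [mul_apply, mulVec, dotProduct, mul_comm] using congrFun (heig i) x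

lemma mul_diagonal_mul_conjTranspose_eq_sum_outer (d : Fin n → ℂ) :
    (of e)ᵀ * diagonal d * ((of e)ᵀ)ᴴ = ∑ i, d i • outer (e i) := by
  ext x y
  rw [mul_apply]
  simp [mul_diagonal, outer, Matrix.sum_apply, vecMulVec_apply, mul_assoc, mul_left_comm]

lemma exp_neg_smul_eq_sum_outer
    (he : ∀ i i', ∑ x, (starRingEnd ℂ) (e i x) * e i' x = if i = i' then 1 else 0)
    (heig : ∀ i, H *ᵥ e i = (ε i : ℂ) • e i) (β : ℝ) :
    NormedSpace.exp ((-β) • H) = ∑ i, (Real.exp (-(β * ε i)) : ℂ) • outer (e i) := by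
  set V : Matrix (Fin n) (Fin n) ℂ := (of e)ᵀ
  have hVV : Vᴴ * V = 1 := conjTranspose_mul_self_of_orthonormal he
  have hV_inv : V⁻¹ = Vᴴ := inv_eq_left_inv hVV
  have hH : H = V * diagonal (fun i => (ε i : ℂ)) * V⁻¹ := by
    rw [hV_inv, ← mul_eq_mul_diagonal_of_mulVec_eq_smul heig, Matrix.mul_assoc,
      mul_eq_one_comm.mp hVV, Matrix.mul_one]
  have hV_unit : IsUnit V := IsUnit.of_mul_eq_one_right _ hVV
  rw [hH, ← smul_mul, ← Matrix.mul_smul, ← diagonal_smul, exp_conj V _ hV_unit, exp_diagonal,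
    hV_inv, mul_diagonal_mul_conjTranspose_eq_sum_outer]
  congr! with i
  rw [Pi.coe_exp, Pi.smul_apply, ← Complex.exp_eq_exp_ℂ, Complex.ofReal_exp, Complex.real_smul]
  push_cast
  rw [neg_mul]

lemma zpart_eq_sum_exp
    (he : ∀ i i', ∑ x, (starRingEnd ℂ) (e i x) * e i' x = if i = i' then 1 else 0)
    (heig : ∀ i, H *ᵥ e i = (ε i : ℂ) • e i) (β : ℝ) : Zpart β H = ∑ i, Real.exp (-(β * ε i)) := by
  rw [Zpart, exp_neg_smul_eq_sum_outer he heig, trace_sum]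
  simp only [trace_smul, trace_outer_of_orthonormal he, smul_eq_mul, mul_one, Complex.re_sum,
    Complex.ofReal_re]

lemma gibbs_eq_sum_outer
    (he : ∀ i i', ∑ x, (starRingEnd ℂ) (e i x) * e i' x = if i = i' then 1 else 0)
    (heig : ∀ i, H *ᵥ e i = (ε i : ℂ) • e i) (β : ℝ) :
    gibbs β H = ∑ i, ((Real.exp (-(β * ε i)) / Zpart β H : ℝ) : ℂ) • outer (e i) := by
  rw [gibbs, exp_neg_smul_eq_sum_outer he heig, smul_sum]
  congr! 1 with i
  push_cast
  rw [smul_smul, inv_mul_eq_div]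

end Spectral

theorem pure_dephasing_guessed_is_exact_general
    (n m : ℕ)
    (β : ℝ)
    (HS0 HSt : Matrix (Fin n) (Fin n) ℂ)
    (HB : Matrix (Fin m) (Fin m) ℂ)
    (e : Fin n → Fin n → ℂ) (ε : Fin n → ℝ)
    (he : ∀ i i', ∑ x, (starRingEnd ℂ) (e i x) * e i' x = if i = i' then 1 else 0)
    (heig : ∀ i, HS0 *ᵥ e i = (ε i : ℂ) • e i)
    (U : Matrix (Fin n × Fin m) (Fin n × Fin m) ℂ)
    (E : Fin n → ℝ)
    (hE : ∀ i, E i = ((HSt * channel U (gibbs β HB) (outer (e i))).trace).re)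
    (Zt : ℝ) (hZt : Zt = ∑ i, Real.exp (-(β * E i)))
    (p : Fin n → ℝ) (hp : ∀ i, p i = Real.exp (-(β * E i)) / Zt)
    (Θ : Matrix (Fin n × Fin m) (Fin n × Fin m) ℂ)
    (hΘ : Θ = ∑ i, (p i : ℂ) • (U * (outer (e i) ⊗ₖ gibbs β HB) * Uᴴ))
    (hHt : HSt = HS0)
    (hdeph : ∀ i, channel U (gibbs β HB) (outer (e i)) = outer (e i)) :
    (∀ i, E i = ε i) ∧ Zt = Zpart β HS0
      ∧ Θ = U * (gibbs β HS0 ⊗ₖ gibbs β HB) * Uᴴ := by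
  have hEε : ∀ i, E i = ε i := fun i => by
    rw [hE, hHt, hdeph, trace_mul_outer_of_mulVec_eq_smul (heig i), trace_outer_of_orthonormal he,
      mul_one, Complex.ofReal_re]
  have hZ : Zt = Zpart β HS0 := by
    simp only [hZt, hEε, zpart_eq_sum_exp he heig]
  refine ⟨hEε, hZ, ?_⟩
  rw [hΘ, gibbs_eq_sum_outer he heig, sum_kronecker, Matrix.mul_sum, Matrix.sum_mul]
  congr! 1 with i
  rw [smul_kronecker, Matrix.mul_smul, Matrix.smul_mul, hp, hEε, hZ]

theorem pure_dephasing_guessed_is_exact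
    (n m : ℕ) (hn : 1 ≤ n) (hm : 1 ≤ m)
    (β : ℝ) (hβ : 0 < β)
    (HS0 HSt : Matrix (Fin n) (Fin n) ℂ)
    (hHS0 : HS0.IsHermitian) (hHSt : HSt.IsHermitian)
    (HB : Matrix (Fin m) (Fin m) ℂ) (hHB : HB.IsHermitian)
    (e : Fin n → Fin n → ℂ) (ε : Fin n → ℝ)
    (he : ∀ i i', ∑ x, (starRingEnd ℂ) (e i x) * e i' x = if i = i' then 1 else 0)
    (heig : ∀ i, HS0 *ᵥ e i = (ε i : ℂ) • e i)
    (U : Matrix (Fin n × Fin m) (Fin n × Fin m) ℂ)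
    (hU : U ∈ Matrix.unitaryGroup (Fin n × Fin m) ℂ)
    (E : Fin n → ℝ)
    (hE : ∀ i, E i = ((HSt * channel U (gibbs β HB) (outer (e i))).trace).re)
    (Zt : ℝ) (hZt : Zt = ∑ i, Real.exp (-(β * E i)))
    (p : Fin n → ℝ) (hp : ∀ i, p i = Real.exp (-(β * E i)) / Zt)
    (Θ : Matrix (Fin n × Fin m) (Fin n × Fin m) ℂ)
    (hΘ : Θ = ∑ i, (p i : ℂ) • (U * (outer (e i) ⊗ₖ gibbs β HB) * Uᴴ))
    (hHt : HSt = HS0)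
    (hdeph : ∀ i, channel U (gibbs β HB) (outer (e i)) = outer (e i)) :
    (∀ i, E i = ε i) ∧ Zt = Zpart β HS0
      ∧ Θ = U * (gibbs β HS0 ⊗ₖ gibbs β HB) * Uᴴ :=
  pure_dephasing_guessed_is_exact_general n m β HS0 HSt HB e ε he heig U E hE Zt hZt p hp Θ hΘ hHt
    hdeph
end
end

section
/- (Standard quantum Jarzynski equality from the two-time measurement scheme.) Σ_{i,j,k,l} (exp(−β ε_i)/Z_S0)·(exp(−β q_j)/Z_B)·|⟨e'_k ⊗ f_l, U (e_i ⊗ f_j)⟩|²·exp(−β ((ε'_k + q_l) − (ε_i + q_j))) = Z_St/Z_S0 = exp(−β ΔF_S). -/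
open Matrix Kronecker BigOperators Finset

noncomputable section

attribute [local instance] Matrix.linftyOpNormedAddCommGroup Matrix.linftyOpNormedSpace
  Matrix.linftyOpNormedRing Matrix.linftyOpNormedAlgebra

lemma exp_mulVec' {k : ℕ} (A : Matrix (Fin k) (Fin k) ℂ) (v : Fin k → ℂ) (μ : ℂ)
    (h : A *ᵥ v = μ • v) :
    NormedSpace.exp A *ᵥ v = Complex.exp μ • v := by
  have hpow : ∀ N : ℕ, A ^ N *ᵥ v = μ ^ N • v := by
    intro N; induction N with
    | zero => simp
    | succ N ih =>
      rw [pow_succ, ← Matrix.mulVec_mulVec, h, Matrix.mulVec_smul, ih, smul_smul, pow_succ,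
        mul_comm]
  let L : Matrix (Fin k) (Fin k) ℂ →ₗ[ℂ] (Fin k → ℂ) :=
    { toFun := fun M => M *ᵥ v
      map_add' := fun M N => Matrix.add_mulVec M N v
      map_smul' := fun c M => Matrix.smul_mulVec c M v }
  let L' : Matrix (Fin k) (Fin k) ℂ →L[ℂ] (Fin k → ℂ) := L.toContinuousLinearMap
  have hL : NormedSpace.exp A *ᵥ v = L' (NormedSpace.exp A) := rfl
  rw [hL, NormedSpace.exp_eq_tsum ℂ, ContinuousLinearMap.map_tsum L'
    (NormedSpace.expSeries_summable' (𝕂 := ℂ) A)]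
  have hterm : ∀ N : ℕ, L' ((N.factorial : ℂ)⁻¹ • A ^ N) = ((N.factorial : ℂ)⁻¹ • μ ^ N) • v := by
    intro N
    have h1 : L' ((N.factorial : ℂ)⁻¹ • A ^ N) = (N.factorial : ℂ)⁻¹ • L' (A ^ N) :=
      map_smul L' _ _
    rw [h1]
    have h2 : L' (A ^ N) = μ ^ N • v := hpow N
    rw [h2, smul_smul, smul_eq_mul]
  rw [tsum_congr hterm, (NormedSpace.expSeries_summable' (𝕂 := ℂ) μ).tsum_smul_const]
  congr 1
  rw [Complex.exp_eq_exp_ℂ, NormedSpace.exp_eq_tsum ℂ]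

lemma onb_complete {k : ℕ} (e : Fin k → Fin k → ℂ)
    (he : ∀ i i', ∑ x, (starRingEnd ℂ) (e i x) * e i' x = if i = i' then 1 else 0) :
    ∀ x y, ∑ i, e i x * (starRingEnd ℂ) (e i y) = if x = y then 1 else 0 := by
  intro x y
  let E : Matrix (Fin k) (Fin k) ℂ := Matrix.of fun x i => e i x
  have h1 : Eᴴ * E = 1 := by
    ext i i'
    simp [Matrix.mul_apply, Matrix.conjTranspose_apply, E, Matrix.one_apply, he i i']
  have h2 : E * Eᴴ = 1 := mul_eq_one_comm.mp h1
  have := congrFun (congrFun h2 x) y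
  simpa [Matrix.mul_apply, Matrix.conjTranspose_apply, E, Matrix.one_apply] using this

lemma trace_onb {k : ℕ} (A : Matrix (Fin k) (Fin k) ℂ)
    (e : Fin k → Fin k → ℂ)
    (he : ∀ i i', ∑ x, (starRingEnd ℂ) (e i x) * e i' x = if i = i' then 1 else 0) :
    A.trace = ∑ i, ∑ x, (starRingEnd ℂ) (e i x) * (A *ᵥ e i) x := by
  have hc := onb_complete e he
  have h1 : ∀ i, ∑ x, (starRingEnd ℂ) (e i x) * (A *ᵥ e i) x
      = ∑ x, ∑ y, (starRingEnd ℂ) (e i x) * (A x y * e i y) := by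
    intro i
    refine Finset.sum_congr rfl fun x _ => ?_
    rw [Matrix.mulVec, dotProduct, Finset.mul_sum]
  rw [Finset.sum_congr rfl fun i _ => h1 i]
  rw [Finset.sum_comm]
  have h2 : ∀ x, ∑ i, ∑ y, (starRingEnd ℂ) (e i x) * (A x y * e i y)
      = ∑ y, A x y * ∑ i, e i y * (starRingEnd ℂ) (e i x) := by
    intro x
    rw [Finset.sum_comm]
    refine Finset.sum_congr rfl fun y _ => ?_
    rw [Finset.mul_sum]
    refine Finset.sum_congr rfl fun i _ => by ring
  rw [Finset.sum_congr rfl fun x _ => h2 x]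
  simp only [hc]
  simp [Matrix.trace, Matrix.diag]

lemma Zpart_eq {k : ℕ} (β : ℝ) (H : Matrix (Fin k) (Fin k) ℂ)
    (e : Fin k → Fin k → ℂ) (ε : Fin k → ℝ)
    (he : ∀ i i', ∑ x, (starRingEnd ℂ) (e i x) * e i' x = if i = i' then 1 else 0)
    (heig : ∀ i, H *ᵥ e i = (ε i : ℂ) • e i) :
    Zpart β H = ∑ i, Real.exp (-(β * ε i)) := by
  have hmv : ∀ i, ((-β : ℝ) • H) *ᵥ e i = ((-(β * ε i) : ℝ) : ℂ) • e i := by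
    intro i
    have h0 : ((-β : ℝ) • H) = ((-β : ℝ) : ℂ) • H := by
      ext x y; simp [Matrix.smul_apply, Complex.real_smul]
    rw [h0, Matrix.smul_mulVec, heig i, smul_smul]
    congr 1
    push_cast
    ring
  have hexp : ∀ i, NormedSpace.exp ((-β : ℝ) • H) *ᵥ e i
      = (Real.exp (-(β * ε i)) : ℂ) • e i := by
    intro i
    rw [exp_mulVec' _ _ _ (hmv i), ← Complex.ofReal_exp]
  have htr : (NormedSpace.exp ((-β : ℝ) • H)).trace
      = ∑ i, (Real.exp (-(β * ε i)) : ℂ) := by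
    rw [trace_onb _ e he]
    refine Finset.sum_congr rfl fun i _ => ?_
    rw [hexp i]
    simp only [Pi.smul_apply, smul_eq_mul]
    have h3 : ∀ x, (starRingEnd ℂ) (e i x) * ((Real.exp (-(β * ε i)) : ℂ) * e i x)
        = (Real.exp (-(β * ε i)) : ℂ) * ((starRingEnd ℂ) (e i x) * e i x) := fun x => by ring
    rw [Finset.sum_congr rfl fun x _ => h3 x, ← Finset.mul_sum, he i i]
    simp
  rw [Zpart, htr, Complex.re_sum]
  exact Finset.sum_congr rfl fun i _ => Complex.ofReal_re _

lemma sum_sq_abs_inner {I N : Type*} [Fintype I] [Fintype N] [DecidableEq N]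
    (U : Matrix N N ℂ) (hU : U * Uᴴ = 1)
    (v : I → N → ℂ)
    (hv : ∀ a b, ∑ i, v i a * (starRingEnd ℂ) (v i b) = if a = b then 1 else 0)
    (w : N → ℂ) (hw : ∑ x, (starRingEnd ℂ) (w x) * w x = 1) :
    ∑ i, (‖∑ x, (starRingEnd ℂ) (w x) * (U *ᵥ v i) x‖)^2 = 1 := by
  have hUU : ∀ x y, ∑ b, U x b * (starRingEnd ℂ) (U y b) = if x = y then 1 else 0 := by
    intro x y
    have := congrFun (congrFun hU x) y
    simpa [Matrix.mul_apply, Matrix.conjTranspose_apply, Matrix.one_apply] using this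
  set u : N → ℂ := fun a => ∑ x, (starRingEnd ℂ) (w x) * U x a with hu
  set c : I → ℂ := fun i => ∑ a, u a * v i a with hc
  have hcc : ∀ i, (∑ x, (starRingEnd ℂ) (w x) * (U *ᵥ v i) x) = c i := by
    intro i
    rw [hc]
    simp only [Matrix.mulVec, dotProduct, Finset.mul_sum, hu, Finset.sum_mul]
    rw [Finset.sum_comm]
    exact Finset.sum_congr rfl fun a _ => Finset.sum_congr rfl fun x _ => by ring
  have huu : ∑ a, (starRingEnd ℂ) (u a) * u a = 1 := by
    have expand : ∀ a, (starRingEnd ℂ) (u a) * u a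
        = ∑ y, ∑ x, ((starRingEnd ℂ) (w x) * w y) * (U x a * (starRingEnd ℂ) (U y a)) := by
      intro a
      rw [hu]
      simp only [map_sum, _root_.map_mul, Complex.conj_conj, RingHomCompTriple.comp_apply,
        RingHom.id_apply]
      rw [Finset.sum_mul]
      refine Finset.sum_congr rfl fun y _ => ?_
      rw [Finset.mul_sum]
      exact Finset.sum_congr rfl fun x _ => by ring
    calc ∑ a, (starRingEnd ℂ) (u a) * u a
        = ∑ a, ∑ y, ∑ x, ((starRingEnd ℂ) (w x) * w y) * (U x a * (starRingEnd ℂ) (U y a)) :=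
          Finset.sum_congr rfl fun a _ => expand a
      _ = ∑ y, ∑ x, ∑ a, ((starRingEnd ℂ) (w x) * w y) * (U x a * (starRingEnd ℂ) (U y a)) := by
          rw [Finset.sum_comm]
          exact Finset.sum_congr rfl fun y _ => Finset.sum_comm
      _ = ∑ y, ∑ x, ((starRingEnd ℂ) (w x) * w y) * (if x = y then 1 else 0) := by
          refine Finset.sum_congr rfl fun y _ => Finset.sum_congr rfl fun x _ => ?_
          rw [← Finset.mul_sum, hUU x y]
      _ = ∑ y, (starRingEnd ℂ) (w y) * w y := by
          refine Finset.sum_congr rfl fun y _ => ?_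
          simp
      _ = 1 := hw
  have key : ∑ i, (starRingEnd ℂ) (c i) * c i = 1 := by
    have expand : ∀ i, (starRingEnd ℂ) (c i) * c i
        = ∑ b, ∑ a, ((starRingEnd ℂ) (u b) * u a) * (v i a * (starRingEnd ℂ) (v i b)) := by
      intro i
      rw [hc]
      simp only [map_sum, _root_.map_mul]
      rw [Finset.sum_mul]
      refine Finset.sum_congr rfl fun b _ => ?_
      rw [Finset.mul_sum]
      exact Finset.sum_congr rfl fun a _ => by ring
    calc ∑ i, (starRingEnd ℂ) (c i) * c i
        = ∑ i, ∑ b, ∑ a, ((starRingEnd ℂ) (u b) * u a) * (v i a * (starRingEnd ℂ) (v i b)) :=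
          Finset.sum_congr rfl fun i _ => expand i
      _ = ∑ b, ∑ a, ∑ i, ((starRingEnd ℂ) (u b) * u a) * (v i a * (starRingEnd ℂ) (v i b)) := by
          rw [Finset.sum_comm]
          exact Finset.sum_congr rfl fun b _ => Finset.sum_comm
      _ = ∑ b, ∑ a, ((starRingEnd ℂ) (u b) * u a) * (if a = b then 1 else 0) := by
          refine Finset.sum_congr rfl fun b _ => Finset.sum_congr rfl fun a _ => ?_
          rw [← Finset.mul_sum, hv a b]
      _ = ∑ b, (starRingEnd ℂ) (u b) * u b := by
          refine Finset.sum_congr rfl fun b _ => ?_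
          simp
      _ = 1 := huu
  have hi : ∀ i, ((‖c i‖ ^ 2 : ℝ) : ℂ) = (starRingEnd ℂ) (c i) * c i := by
    intro i
    rw [Complex.sq_norm]
    exact Complex.normSq_eq_conj_mul_self
  have h2 : (∑ i, (‖c i‖)^2 : ℝ) = 1 := by
    apply Complex.ofReal_injective
    calc ((∑ i, (‖c i‖)^2 : ℝ) : ℂ)
        = ∑ i, ((‖c i‖ ^ 2 : ℝ) : ℂ) := Complex.ofReal_sum _ _
      _ = ∑ i, (starRingEnd ℂ) (c i) * c i := Finset.sum_congr rfl fun i _ => hi i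
      _ = 1 := key
      _ = ((1:ℝ):ℂ) := by norm_num
  calc ∑ i, (‖∑ x, (starRingEnd ℂ) (w x) * (U *ᵥ v i) x‖)^2
      = ∑ i, (‖c i‖)^2 :=
        Finset.sum_congr rfl fun i _ => by rw [hcc i]
    _ = 1 := h2

theorem ttm_standard_jarzynski
    (n m : ℕ) (hn : 1 ≤ n) (hm : 1 ≤ m)
    (β : ℝ) (hβ : 0 < β)
    (HS0 HSt : Matrix (Fin n) (Fin n) ℂ)
    (hHS0 : HS0.IsHermitian) (hHSt : HSt.IsHermitian)
    (HB : Matrix (Fin m) (Fin m) ℂ) (hHB : HB.IsHermitian)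
    (e : Fin n → Fin n → ℂ) (ε : Fin n → ℝ)
    (he : ∀ i i', ∑ x, (starRingEnd ℂ) (e i x) * e i' x = if i = i' then 1 else 0)
    (heig : ∀ i, HS0 *ᵥ e i = (ε i : ℂ) • e i)
    (e' : Fin n → Fin n → ℂ) (ε' : Fin n → ℝ)
    (he' : ∀ k k', ∑ x, (starRingEnd ℂ) (e' k x) * e' k' x = if k = k' then 1 else 0)
    (heig' : ∀ k, HSt *ᵥ e' k = (ε' k : ℂ) • e' k)
    (f : Fin m → Fin m → ℂ) (q : Fin m → ℝ)
    (hf : ∀ j j', ∑ x, (starRingEnd ℂ) (f j x) * f j' x = if j = j' then 1 else 0)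
    (hfeig : ∀ j, HB *ᵥ f j = (q j : ℂ) • f j)
    (U : Matrix (Fin n × Fin m) (Fin n × Fin m) ℂ)
    (hU : U ∈ Matrix.unitaryGroup (Fin n × Fin m) ℂ)
    (P : Fin n → Fin m → Fin n → Fin m → ℝ)
    (hP : ∀ i j k l, P i j k l = (Real.exp (-(β * ε i)) / Zpart β HS0)
      * (Real.exp (-(β * q j)) / Zpart β HB)
      * (‖∑ x, (starRingEnd ℂ) (e' k x.1 * f l x.2)
          * (U *ᵥ fun y : Fin n × Fin m => e i y.1 * f j y.2) x‖) ^ 2)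
    (Wv : Fin n → Fin m → Fin n → Fin m → ℝ)
    (hWv : ∀ i j k l, Wv i j k l = (ε' k + q l) - (ε i + q j))
    (ΔF : ℝ) (hΔF : ΔF = -(β⁻¹ * Real.log (Zpart β HSt / Zpart β HS0))) :
    ∑ i, ∑ j, ∑ k, ∑ l, P i j k l * Real.exp (-(β * Wv i j k l))
        = Zpart β HSt / Zpart β HS0
      ∧ Zpart β HSt / Zpart β HS0 = Real.exp (-(β * ΔF)) := by
  have hnE : Nonempty (Fin n) := ⟨⟨0, hn⟩⟩
  have hmE : Nonempty (Fin m) := ⟨⟨0, hm⟩⟩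
  have hZ0 : Zpart β HS0 = ∑ i, Real.exp (-(β * ε i)) := Zpart_eq β HS0 e ε he heig
  have hZt : Zpart β HSt = ∑ k, Real.exp (-(β * ε' k)) := Zpart_eq β HSt e' ε' he' heig'
  have hZB : Zpart β HB = ∑ j, Real.exp (-(β * q j)) := Zpart_eq β HB f q hf hfeig
  have hZ0pos : 0 < Zpart β HS0 := by
    rw [hZ0]; exact Finset.sum_pos (fun i _ => Real.exp_pos _) Finset.univ_nonempty
  have hZtpos : 0 < Zpart β HSt := by
    rw [hZt]; exact Finset.sum_pos (fun i _ => Real.exp_pos _) Finset.univ_nonempty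
  have hZBpos : 0 < Zpart β HB := by
    rw [hZB]; exact Finset.sum_pos (fun i _ => Real.exp_pos _) Finset.univ_nonempty
  constructor
  · -- main Jarzynski sum
    have hUmul : U * Uᴴ = 1 := by
      rw [← Matrix.star_eq_conjTranspose]
      exact (Matrix.mem_unitaryGroup_iff.mp hU)
    -- orthonormal families for the product space
    set v : (Fin n × Fin m) → (Fin n × Fin m) → ℂ :=
      fun p y => e p.1 y.1 * f p.2 y.2 with hvdef
    have hv : ∀ a b, ∑ p : Fin n × Fin m, v p a * (starRingEnd ℂ) (v p b)
        = if a = b then 1 else 0 := by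
      intro a b
      have hce := onb_complete e he
      have hcf := onb_complete f hf
      rw [Fintype.sum_prod_type]
      calc ∑ i, ∑ j, v (i, j) a * (starRingEnd ℂ) (v (i, j) b)
          = ∑ i, ∑ j, (e i a.1 * (starRingEnd ℂ) (e i b.1))
              * (f j a.2 * (starRingEnd ℂ) (f j b.2)) := by
            refine Finset.sum_congr rfl fun i _ => Finset.sum_congr rfl fun j _ => ?_
            simp only [hvdef, _root_.map_mul]
            ring
        _ = (∑ i, e i a.1 * (starRingEnd ℂ) (e i b.1))
              * (∑ j, f j a.2 * (starRingEnd ℂ) (f j b.2)) := by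
            rw [Finset.sum_mul_sum]
        _ = (if a.1 = b.1 then 1 else 0) * (if a.2 = b.2 then 1 else 0) := by
            rw [hce a.1 b.1, hcf a.2 b.2]
        _ = if a = b then 1 else 0 := by
            by_cases h1 : a.1 = b.1 <;> by_cases h2 : a.2 = b.2 <;>
              simp [Prod.ext_iff, h1, h2]
    have hsum1 : ∀ (k : Fin n) (l : Fin m),
        ∑ i, ∑ j, (‖∑ x, (starRingEnd ℂ) (e' k x.1 * f l x.2)
          * (U *ᵥ fun y : Fin n × Fin m => e i y.1 * f j y.2) x‖) ^ 2 = 1 := by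
      intro k l
      have hw : ∑ x : Fin n × Fin m,
          (starRingEnd ℂ) (e' k x.1 * f l x.2) * (e' k x.1 * f l x.2) = 1 := by
        rw [Fintype.sum_prod_type]
        calc ∑ x1, ∑ x2, (starRingEnd ℂ) (e' k x1 * f l x2) * (e' k x1 * f l x2)
            = ∑ x1, ∑ x2, ((starRingEnd ℂ) (e' k x1) * e' k x1)
                * ((starRingEnd ℂ) (f l x2) * f l x2) := by
              refine Finset.sum_congr rfl fun x1 _ => Finset.sum_congr rfl fun x2 _ => ?_
              simp only [_root_.map_mul]
              ring
          _ = (∑ x1, (starRingEnd ℂ) (e' k x1) * e' k x1)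
                * (∑ x2, (starRingEnd ℂ) (f l x2) * f l x2) := by
              rw [Finset.sum_mul_sum]
          _ = 1 := by rw [he' k k, hf l l]; simp
      have := sum_sq_abs_inner U hUmul v hv (fun x => e' k x.1 * f l x.2) hw
      rw [Fintype.sum_prod_type] at this
      exact this
    -- rewrite each summand
    set Z0 := Zpart β HS0
    set ZB := Zpart β HB
    set C : Fin n → Fin m → ℝ :=
      fun k l => Real.exp (-(β * ε' k)) * Real.exp (-(β * q l)) / (Z0 * ZB) with hCdef
    set A : Fin n → Fin m → Fin n → Fin m → ℝ :=
      fun i j k l => (‖∑ x, (starRingEnd ℂ) (e' k x.1 * f l x.2)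
          * (U *ᵥ fun y : Fin n × Fin m => e i y.1 * f j y.2) x‖) ^ 2 with hAdef
    have hterm : ∀ i j k l, P i j k l * Real.exp (-(β * Wv i j k l)) = C k l * A i j k l := by
      intro i j k l
      have hexp : Real.exp (-(β * ε i)) * Real.exp (-(β * q j))
          * Real.exp (-(β * ((ε' k + q l) - (ε i + q j))))
          = Real.exp (-(β * ε' k)) * Real.exp (-(β * q l)) := by
        rw [← Real.exp_add, ← Real.exp_add, ← Real.exp_add]
        congr 1
        ring
      rw [hP, hWv, hCdef, hAdef]
      simp only
      rw [← hexp]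
      ring
    calc ∑ i, ∑ j, ∑ k, ∑ l, P i j k l * Real.exp (-(β * Wv i j k l))
        = ∑ i, ∑ j, ∑ k, ∑ l, C k l * A i j k l := by
          refine Finset.sum_congr rfl fun i _ => Finset.sum_congr rfl fun j _ =>
            Finset.sum_congr rfl fun k _ => Finset.sum_congr rfl fun l _ => hterm i j k l
      _ = ∑ i, ∑ k, ∑ j, ∑ l, C k l * A i j k l :=
          Finset.sum_congr rfl fun i _ => Finset.sum_comm
      _ = ∑ k, ∑ i, ∑ j, ∑ l, C k l * A i j k l := Finset.sum_comm
      _ = ∑ k, ∑ i, ∑ l, ∑ j, C k l * A i j k l :=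
          Finset.sum_congr rfl fun k _ => Finset.sum_congr rfl fun i _ => Finset.sum_comm
      _ = ∑ k, ∑ l, ∑ i, ∑ j, C k l * A i j k l :=
          Finset.sum_congr rfl fun k _ => Finset.sum_comm
      _ = ∑ k, ∑ l, C k l * ∑ i, ∑ j, A i j k l := by
          refine Finset.sum_congr rfl fun k _ => Finset.sum_congr rfl fun l _ => ?_
          rw [Finset.mul_sum]
          exact Finset.sum_congr rfl fun i _ => (Finset.mul_sum _ _ _).symm
      _ = ∑ k, ∑ l, C k l := by
          refine Finset.sum_congr rfl fun k _ => Finset.sum_congr rfl fun l _ => ?_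
          rw [hsum1 k l, mul_one]
      _ = (∑ k, Real.exp (-(β * ε' k))) * (∑ l, Real.exp (-(β * q l))) / (Z0 * ZB) := by
          rw [Finset.sum_mul_sum, Finset.sum_div]
          exact Finset.sum_congr rfl fun k _ => by rw [Finset.sum_div]
      _ = Zpart β HSt / Zpart β HS0 := by
          rw [← hZt, ← hZB]
          rw [mul_div_mul_right _ _ (ne_of_gt hZBpos)]
  · -- free energy identity
    rw [hΔF]
    have hβne : β ≠ 0 := ne_of_gt hβ
    have : -(β * -(β⁻¹ * Real.log (Zpart β HSt / Zpart β HS0)))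
        = Real.log (Zpart β HSt / Zpart β HS0) := by
      field_simp
    rw [this, Real.exp_log (div_pos hZtpos hZ0pos)]
end
end
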